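/- arXiv:2301.01267 — 7 statements merged into one kernel-verified Lean document; each statement's English description precedes it below -/
import Mathlib

section
/- Let (X_i)_{i≥1} be nonnegative random variables with E[exp(X_i^p)] < C for all i, where p > 0 and C > 0 are constants. Define M_n = max_{1 ≤ i ≤ n} X_i − (2 log n)^{1/p}. Then there exist constants c, C' > 0 depending only on p and C such that E[exp(c · (M_n)_+^p)] < C' for all n ≥ 1. -/
/-!
Put `L = (2 log n)^{1/p}`, so that `L^p = 2 log n`. If the maximum `X_j` exceeds `L`, then
`(X_j - L)^p ≤ X_j^p` and `L^p ≤ X_j^p` give `½ (X_j - L)^p ≤ X_j^p - log n`. Hence pointwise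
`exp (½ (M_n)₊^p) ≤ 1 + (1/n) ∑_{i ≤ n} exp (X_i^p)`, a union bound that needs no independence,
and taking expectations bounds the left side by `1 + C`.
-/

open MeasureTheory

section

open Real

lemma exp_half_rpow_posPart_sub_le {p L : ℝ} (hp : 0 < p) (hL : 0 ≤ L) (x : ℝ) :
    exp (1 / 2 * max (x - L) 0 ^ p) ≤ 1 + exp (-(L ^ p / 2)) * exp (x ^ p) := by
  rcases le_or_gt x L with hxL | hLx
  · rw [max_eq_right (by linarith), zero_rpow hp.ne', mul_zero, exp_zero]
    exact le_add_of_nonneg_right (by positivity)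
  · rw [max_eq_left (by linarith), ← exp_add]
    have hsub : (x - L) ^ p ≤ x ^ p := rpow_le_rpow (by linarith) (by linarith) hp.le
    have hL' : L ^ p ≤ x ^ p := rpow_le_rpow hL hLx.le hp.le
    have : 1 / 2 * (x - L) ^ p ≤ -(L ^ p / 2) + x ^ p := by linarith
    exact (exp_le_exp.mpr this).trans (le_add_of_nonneg_left zero_le_one)

lemma exp_half_rpow_posPart_sup'_sub_le {ι : Type*} {s : Finset ι} (hs : s.Nonempty)
    (f : ι → ℝ) {p L : ℝ} (hp : 0 < p) (hL : 0 ≤ L) :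
    exp (1 / 2 * max (s.sup' hs f - L) 0 ^ p)
      ≤ 1 + exp (-(L ^ p / 2)) * ∑ i ∈ s, exp (f i ^ p) := by
  obtain ⟨j, hj, hsup⟩ := s.exists_mem_eq_sup' hs f
  rw [hsup]
  refine (exp_half_rpow_posPart_sub_le hp hL (f j)).trans ?_
  gcongr
  exact Finset.single_le_sum (f := fun i => exp (f i ^ p)) (fun i _ => (exp_pos _).le) hj

lemma lintegral_ofReal_one_add_mul_sum_le {Ω ι : Type*} [MeasurableSpace Ω] {μ : Measure Ω}
    [IsProbabilityMeasure μ] (s : Finset ι) {a : ℝ} (ha : 0 ≤ a) {h : ι → Ω → ℝ}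
    (hmeas : ∀ i, Measurable (h i)) (hnonneg : ∀ i ω, 0 ≤ h i ω) {K : ENNReal}
    (hK : ∀ i ∈ s, ∫⁻ ω, ENNReal.ofReal (h i ω) ∂μ ≤ K) :
    ∫⁻ ω, ENNReal.ofReal (1 + a * ∑ i ∈ s, h i ω) ∂μ ≤ 1 + ENNReal.ofReal (a * s.card) * K := by
  have hmeas' : ∀ i, Measurable fun ω => ENNReal.ofReal (h i ω) :=
    fun i => ENNReal.measurable_ofReal.comp (hmeas i)
  have hpoint : ∀ ω, ENNReal.ofReal (1 + a * ∑ i ∈ s, h i ω)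
      = 1 + ENNReal.ofReal a * ∑ i ∈ s, ENNReal.ofReal (h i ω) := fun ω => by
    rw [ENNReal.ofReal_add zero_le_one (mul_nonneg ha (Finset.sum_nonneg fun i _ => hnonneg i ω)),
      ENNReal.ofReal_one, ENNReal.ofReal_mul ha, ENNReal.ofReal_sum_of_nonneg fun i _ => hnonneg i ω]
  calc ∫⁻ ω, ENNReal.ofReal (1 + a * ∑ i ∈ s, h i ω) ∂μ
      = 1 + ENNReal.ofReal a * ∑ i ∈ s, ∫⁻ ω, ENNReal.ofReal (h i ω) ∂μ := by
        simp_rw [hpoint]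
        rw [lintegral_add_left measurable_const, lintegral_const, measure_univ, mul_one,
          lintegral_const_mul _ (Finset.measurable_sum _ fun i _ => hmeas' i),
          lintegral_finsetSum _ fun i _ => hmeas' i]
    _ ≤ 1 + ENNReal.ofReal a * (s.card • K) := by
        gcongr
        exact Finset.sum_le_card_nsmul _ _ _ hK
    _ = 1 + ENNReal.ofReal (a * s.card) * K := by
        rw [nsmul_eq_mul, ← mul_assoc, ENNReal.ofReal_mul ha, ENNReal.ofReal_natCast]

end

/-- If `(X_i)` are nonnegative random variables with `E[exp(X_i^p)] < C`, then with
`M_n = max_{1 ≤ i ≤ n} X_i - (2 log n)^{1/p}` one has `E[exp(c (M_n)₊^p)] < C'`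
for constants `c, C'` depending only on `p` and `C`. -/
theorem stmt3 (p C : ℝ) (hp : 0 < p) (hC : 0 < C) :
    ∃ c C' : ℝ, 0 < c ∧ 0 < C' ∧
      ∀ (Ω : Type) [MeasurableSpace Ω] (μ : Measure Ω) [IsProbabilityMeasure μ]
        (X : ℕ → Ω → ℝ),
        (∀ i, Measurable (X i)) →
        (∀ i ω, 0 ≤ X i ω) →
        (∀ i, (∫⁻ ω, ENNReal.ofReal (Real.exp ((X i ω) ^ p)) ∂μ) < ENNReal.ofReal C) →
        ∀ n : ℕ, ∀ hn : 1 ≤ n,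
          (∫⁻ ω, ENNReal.ofReal (Real.exp (c *
              (max ((Finset.Icc 1 n).sup' (Finset.nonempty_Icc.mpr hn) (fun i => X i ω)
                  - (2 * Real.log n) ^ (1 / p)) 0) ^ p)) ∂μ)
            < ENNReal.ofReal C' := by
  refine ⟨1 / 2, C + 2, by norm_num, by linarith, ?_⟩
  intro Ω _ μ _ X hmeas _ hexp n hn
  have hlog : 0 ≤ 2 * Real.log n := by positivity
  set L := (2 * Real.log n) ^ (1 / p) with hL
  have hweight : Real.exp (-(L ^ p / 2)) * (Finset.Icc 1 n).card = 1 := by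
    have hn' : (0 : ℝ) < n := by exact_mod_cast hn
    rw [hL, one_div, Real.rpow_inv_rpow hlog hp.ne', Nat.card_Icc, Nat.add_sub_cancel,
      mul_div_cancel_left₀ _ two_ne_zero, Real.exp_neg, Real.exp_log hn', inv_mul_cancel₀ hn'.ne']
  calc _ ≤ ∫⁻ ω, ENNReal.ofReal (1 + Real.exp (-(L ^ p / 2)) *
          ∑ i ∈ Finset.Icc 1 n, Real.exp (X i ω ^ p)) ∂μ :=
        lintegral_mono fun ω => ENNReal.ofReal_le_ofReal <|
          exp_half_rpow_posPart_sup'_sub_le _ _ hp (by positivity)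
    _ ≤ 1 + ENNReal.ofReal (Real.exp (-(L ^ p / 2)) * (Finset.Icc 1 n).card) * ENNReal.ofReal C :=
        lintegral_ofReal_one_add_mul_sum_le _ (Real.exp_pos _).le
          (fun i => Real.measurable_exp.comp ((hmeas i).pow_const p))
          (fun i ω => (Real.exp_pos _).le) (fun i _ => (hexp i).le)
    _ < ENNReal.ofReal (C + 2) := by
        rw [hweight, ENNReal.ofReal_one, one_mul, ENNReal.ofReal_add hC.le zero_le_two, add_comm,
          ENNReal.ofReal_ofNat]
        exact ENNReal.add_lt_add_left ENNReal.ofReal_ne_top ENNReal.one_lt_two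
end

section
/- Let d ≥ 1, R > 1, and let ω be a balanced nearest-neighbor environment on ℤ^d with ω(x, x±e_i) ≥ κ > 0 for all x, i. Let η : ℤ^d → [0,1] satisfy η(x) = 1 for all x outside the discrete ball B_{3R}. Then the only bounded function u : ℤ^d → ℝ solving L_ω u = (1/R²) u η on all of ℤ^d is u ≡ 0, where L_ω u(x) = ∑_{y~x} ω(x,y)[u(y) − u(x)]. -/
/-!
If `u` had a positive supremum `s`, then outside `B_{3R}` the equation reads
`u(x) (1 + 1/R²) = ∑ ω u(y) ≤ s`, so `u` stays below `s / (1 + 1/R²) < s` there and the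
supremum is attained in the finite ball. At a maximum point `L_ω u ≥ 0` forces every
neighbour to be a maximum point too, so the finite set of maximum points is closed under
`x ↦ x + e_i`, which is impossible. Applying this to `u` and `-u` gives `u ≡ 0`.
-/

open scoped BigOperators

noncomputable def znorm (d : ℕ) (x : Fin d → ℤ) : ℝ :=
  Real.sqrt (∑ i, ((x i : ℝ)) ^ 2)

def lstep (d : ℕ) (x : Fin d → ℤ) (i : Fin d) (b : Bool) : Fin d → ℤ :=
  fun j => if j = i then x j + (if b then 1 else -1) else x j

noncomputable def Lgen (d : ℕ) (ω : (Fin d → ℤ) → Fin d → Bool → ℝ)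
    (u : (Fin d → ℤ) → ℝ) (x : Fin d → ℤ) : ℝ :=
  ∑ i : Fin d, ∑ b : Bool, ω x i b * (u (lstep d x i b) - u x)

open Set

lemma abs_le_znorm {d : ℕ} (x : Fin d → ℤ) (i : Fin d) : |(x i : ℝ)| ≤ znorm d x := by
  rw [znorm, ← Real.sqrt_sq_eq_abs]
  exact Real.sqrt_le_sqrt <|
    Finset.single_le_sum (f := fun j => ((x j : ℝ)) ^ 2) (fun j _ => sq_nonneg _) (Finset.mem_univ i)

lemma finite_setOf_znorm_lt (d : ℕ) (r : ℝ) : {x : Fin d → ℤ | znorm d x < r}.Finite := by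
  refine (Set.Finite.pi fun _ => finite_Icc (-⌈r⌉) ⌈r⌉).subset fun x hx i _ => ?_
  have : |(x i : ℝ)| < ⌈r⌉ := ((abs_le_znorm x i).trans_lt hx).trans_le (Int.le_ceil r)
  exact abs_le.mp (by exact_mod_cast this.le)

lemma Set.Finite.eq_empty_of_forall_lstep_mem {d : ℕ} {S : Set (Fin d → ℤ)} (hS : S.Finite)
    (i : Fin d) (hstep : ∀ x ∈ S, lstep d x i true ∈ S) : S = ∅ := by
  by_contra hne
  obtain ⟨x, hx, hmax⟩ := S.exists_max_image (· i) hS (nonempty_iff_ne_empty.mpr hne)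
  simpa [lstep] using hmax _ (hstep x hx)

lemma exists_forall_le_of_finite_setOf_lt {α : Type*} {u : α → ℝ} {c : ℝ}
    (hfin : {x | c < u x}.Finite) {x₀ : α} (hx₀ : c < u x₀) : ∃ x, ∀ y, u y ≤ u x := by
  obtain ⟨x, hx, hmax⟩ := exists_max_image _ u hfin ⟨x₀, hx₀⟩
  refine ⟨x, fun y => ?_⟩
  by_cases hy : c < u y
  · exact hmax y hy
  · exact (not_lt.mp hy).trans (hx₀.le.trans (hmax x₀ hx₀))

section Generator

variable {d : ℕ} {ω : (Fin d → ℤ) → Fin d → Bool → ℝ} {u : (Fin d → ℤ) → ℝ} {x : Fin d → ℤ}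

lemma Lgen_neg : Lgen d ω (fun y => -u y) x = -Lgen d ω u x := by
  simp only [Lgen, ← Finset.sum_neg_distrib]
  congr 1 with i
  congr 1 with b
  ring

lemma Lgen_le_sub_of_forall_le (hω : ∀ i b, 0 ≤ ω x i b)
    (hsum : ∑ i : Fin d, ∑ b : Bool, ω x i b = 1) {s : ℝ} (hs : ∀ y, u y ≤ s) :
    Lgen d ω u x ≤ s - u x :=
  calc Lgen d ω u x ≤ ∑ i : Fin d, ∑ b : Bool, ω x i b * (s - u x) := by
        unfold Lgen
        gcongr with i _ b _
        · exact hω i b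
        · exact hs _
    _ = s - u x := by simp only [← Finset.sum_mul, hsum, one_mul]

lemma apply_lstep_eq_of_forall_le (hω : ∀ i b, 0 < ω x i b) (hmax : ∀ y, u y ≤ u x)
    (hL : 0 ≤ Lgen d ω u x) (i : Fin d) (b : Bool) : u (lstep d x i b) = u x := by
  have hterm : ∀ i b, ω x i b * (u (lstep d x i b) - u x) ≤ 0 := fun i b =>
    mul_nonpos_of_nonneg_of_nonpos (hω i b).le (sub_nonpos.mpr (hmax _))
  have hzero : Lgen d ω u x = 0 := le_antisymm
    (Finset.sum_nonpos fun i _ => Finset.sum_nonpos fun b _ => hterm i b) hL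
  rw [Lgen, Finset.sum_eq_zero_iff_of_nonpos fun i _ => Finset.sum_nonpos fun b _ => hterm i b]
    at hzero
  have := (Finset.sum_eq_zero_iff_of_nonpos fun b _ => hterm i b).mp (hzero i (Finset.mem_univ i)) b
    (Finset.mem_univ b)
  exact sub_eq_zero.mp ((mul_eq_zero.mp this).resolve_left (hω i b).ne')

end Generator

lemma nonpos_of_Lgen_eq {d : ℕ} (hd : 1 ≤ d) {R : ℝ} (hR : 1 < R)
    {ω : (Fin d → ℤ) → Fin d → Bool → ℝ} (hω : ∀ x i b, 0 < ω x i b)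
    (hsum : ∀ x, ∑ i : Fin d, ∑ b : Bool, ω x i b = 1)
    {η : (Fin d → ℤ) → ℝ} (hη0 : ∀ x, 0 ≤ η x) (hηout : ∀ x, ¬ znorm d x < 3 * R → η x = 1)
    {u : (Fin d → ℤ) → ℝ} (hu : BddAbove (range u))
    (heq : ∀ x, Lgen d ω u x = (1 / R ^ 2) * u x * η x) (x : Fin d → ℤ) : u x ≤ 0 := by
  by_contra! hx
  set s := sSup (range u)
  have hus : ∀ y, u y ≤ s := fun y => le_csSup hu ⟨y, rfl⟩
  have ha : 1 < 1 + 1 / R ^ 2 := lt_add_of_pos_right 1 (by positivity)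
  have hball : {y | s / (1 + 1 / R ^ 2) < u y} ⊆ {y | znorm d y < 3 * R} := by
    intro y hy
    by_contra hout
    have := Lgen_le_sub_of_forall_le (fun i b => (hω y i b).le) (hsum y) hus
    rw [heq y, hηout y hout] at this
    rw [mem_ofPred, div_lt_iff₀ (by linarith)] at hy
    linarith
  have hfin := (finite_setOf_znorm_lt d (3 * R)).subset hball
  obtain ⟨_, ⟨y₀, rfl⟩, hy₀⟩ :=
    exists_lt_of_lt_csSup (range_nonempty u) (div_lt_self (hx.trans_le (hus x)) ha)
  obtain ⟨m, hm⟩ := exists_forall_le_of_finite_setOf_lt hfin hy₀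
  set S := {y | ∀ z, u z ≤ u y}
  have hS_step : ∀ y ∈ S, lstep d y ⟨0, hd⟩ true ∈ S := by
    intro y hy
    have hL : 0 ≤ Lgen d ω u y := by
      rw [heq y]
      have hηy := hη0 y
      have huy : 0 < u y := hx.trans_le (hy x)
      positivity
    rw [mem_ofPred, apply_lstep_eq_of_forall_le (hω y) hy hL]
    exact hy
  have hS_fin : S.Finite := hfin.subset fun y hy => hy₀.trans_le (hy y₀)
  exact (hS_fin.eq_empty_of_forall_lstep_mem _ hS_step).subset hm

theorem stmt7_general (d : ℕ) (hd : 1 ≤ d) (R : ℝ) (hR : 1 < R)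
    (κ : ℝ) (hκ : 0 < κ)
    (ω : (Fin d → ℤ) → Fin d → Bool → ℝ)
    (hell : ∀ x i b, κ ≤ ω x i b)
    (hsum : ∀ x, ∑ i : Fin d, ∑ b : Bool, ω x i b = 1)
    (η : (Fin d → ℤ) → ℝ)
    (hη0 : ∀ x, 0 ≤ η x)
    (hηout : ∀ x, ¬ znorm d x < 3 * R → η x = 1)
    (u : (Fin d → ℤ) → ℝ)
    (hubdd : ∃ M : ℝ, ∀ x, |u x| ≤ M)
    (heq : ∀ x, Lgen d ω u x = (1 / R ^ 2) * u x * η x) :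
    ∀ x, u x = 0 := by
  have hω : ∀ x i b, 0 < ω x i b := fun x i b => hκ.trans_le (hell x i b)
  obtain ⟨M, hM⟩ := hubdd
  have hneg : ∀ x, Lgen d ω (fun y => -u y) x = (1 / R ^ 2) * (-u x) * η x := fun x => by
    rw [Lgen_neg, heq x]
    ring
  intro x
  refine le_antisymm (nonpos_of_Lgen_eq hd hR hω hsum hη0 hηout ?_ heq x) ?_
  · exact ⟨M, forall_mem_range.mpr fun y => (abs_le.mp (hM y)).2⟩
  · refine neg_nonpos.mp (nonpos_of_Lgen_eq hd hR hω hsum hη0 hηout ?_ hneg x)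
    exact ⟨M, forall_mem_range.mpr fun y => neg_le.mpr (abs_le.mp (hM y)).1⟩

/-- The only bounded solution of `L_ω u = (1/R²) u η` on `ℤ^d`, where `η : ℤ^d → [0,1]`
equals `1` outside `B_{3R}` and `ω` is balanced and uniformly elliptic, is `u ≡ 0`. -/
theorem stmt7 (d : ℕ) (hd : 1 ≤ d) (R : ℝ) (hR : 1 < R)
    (κ : ℝ) (hκ : 0 < κ)
    (ω : (Fin d → ℤ) → Fin d → Bool → ℝ)
    (hell : ∀ x i b, κ ≤ ω x i b)
    (hsum : ∀ x, ∑ i : Fin d, ∑ b : Bool, ω x i b = 1)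
    (hbal : ∀ x i, ω x i true = ω x i false)
    (η : (Fin d → ℤ) → ℝ)
    (hη0 : ∀ x, 0 ≤ η x) (hη1 : ∀ x, η x ≤ 1)
    (hηout : ∀ x, ¬ znorm d x < 3 * R → η x = 1)
    (u : (Fin d → ℤ) → ℝ)
    (hubdd : ∃ M : ℝ, ∀ x, |u x| ≤ M)
    (heq : ∀ x, Lgen d ω u x = (1 / R ^ 2) * u x * η x) :
    ∀ x, u x = 0 :=
  stmt7_general d hd R hR κ hκ ω hell hsum η hη0 hηout u hubdd heq
end

section
/- Let (X_n)_{n≥0} be a martingale in ℤ^d with steps of length 1 started at the origin, and let τ_m = inf{n : X_n ∉ B_{mR}} for integers m ≥ 1 and real R ≥ 1. Then for every k > 0 and integer n_0 ≥ 1, P(τ_{n_0} ≤ k R²) ≤ C √k / n_0 for a constant C depending only on d. -/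
/-!
Each coordinate `±Xⁱ` of `X` is a real martingale with increments of size at most `1` started
at `0`. Its increments are orthogonal in `L²`, so `E[(Xⁱ_n)²] ≤ n` and `E|Xⁱ_n| ≤ √n`. If
`‖X_n‖ ≥ n₀ R` for some `n ≤ k R²`, then `|Xⁱ_n| ≥ n₀ R / √d` for some `i`, and Doob's maximal
inequality for the nonnegative submartingales `(±Xⁱ)₊` bounds the probability of each of these
`2d` events by `√(k R²) √d / (n₀ R)`.
-/

open MeasureTheory
open scoped ENNReal NNReal

theorem abs_le_of_abs_sub_le_one {Ω : Type*} {f : ℕ → Ω → ℝ} (h0 : ∀ ω, f 0 ω = 0)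
    (hstep : ∀ n ω, |f (n + 1) ω - f n ω| ≤ 1) (n : ℕ) (ω : Ω) : |f n ω| ≤ n := by
  induction n with
  | zero => simp [h0]
  | succ n ih =>
    push_cast
    linarith [abs_sub_abs_le_abs_sub (f (n + 1) ω) (f n ω), hstep n ω]

theorem EuclideanSpace.exists_norm_le_sqrt_card_mul_abs {ι : Type*} [Fintype ι]
    (x : EuclideanSpace ℝ ι) (hx : x ≠ 0) : ∃ i, ‖x‖ ≤ √(Fintype.card ι) * |x i| := by
  have : Nonempty ι := by
    by_contra hι
    rw [not_nonempty_iff] at hι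
    exact hx (Subsingleton.elim _ _)
  have hcard : 0 < √(Fintype.card ι) := by simp [Fintype.card_pos]
  have hsum : ∑ _i : ι, (‖x‖ / √(Fintype.card ι)) ^ 2 ≤ ∑ i, x i ^ 2 := by
    rw [Finset.sum_const, Finset.card_univ, div_pow, Real.sq_sqrt (Nat.cast_nonneg _),
      nsmul_eq_mul, mul_div_cancel₀ _ (by positivity), EuclideanSpace.real_norm_sq_eq]
  obtain ⟨i, -, hi⟩ := Finset.exists_le_of_sum_le Finset.univ_nonempty hsum
  refine ⟨i, (div_le_iff₀' hcard).1 ?_⟩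
  simpa [abs_of_nonneg (by positivity : 0 ≤ ‖x‖ / √(Fintype.card ι))] using sq_le_sq.1 hi

namespace MeasureTheory

variable {Ω ι : Type*} {m : MeasurableSpace Ω} {μ : Measure Ω}

section Preorder

variable [Preorder ι] {ℱ : Filtration ι m}

theorem Martingale.continuousLinearMap_comp {E F : Type*} [NormedAddCommGroup E]
    [NormedSpace ℝ E] [CompleteSpace E] [NormedAddCommGroup F] [NormedSpace ℝ F]
    [CompleteSpace F] {f : ι → Ω → E} (hf : Martingale f ℱ μ) (T : E →L[ℝ] F) :
    Martingale (fun i => T ∘ f i) ℱ μ :=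
  ⟨fun i => T.continuous.comp_stronglyMeasurable (hf.stronglyMeasurable i),
    fun _ j hij => (T.comp_condExp_comm (hf.integrable j)).symm.trans
      ((hf.condExp_ae_eq hij).fun_comp T)⟩

variable [IsFiniteMeasure μ] {f : ι → Ω → ℝ}

theorem Martingale.integral_mul_sub_eq_zero (hf : Martingale f ℱ μ) {i j : ι} (hij : i ≤ j)
    (hi : MemLp (f i) 2 μ) (hj : MemLp (f j) 2 μ) :
    ∫ ω, f i ω * (f j ω - f i ω) ∂μ = 0 := by
  have hint : Integrable (f i * (f j - f i)) μ := hi.integrable_mul (hj.sub hi)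
  have hcond : μ[f j - f i | ℱ i] =ᵐ[μ] 0 := by
    filter_upwards [condExp_sub (hf.integrable j) (hf.integrable i) (ℱ i),
      hf.condExp_ae_eq hij] with ω hsub hj
    rw [hsub, Pi.sub_apply, hj,
      condExp_of_stronglyMeasurable (ℱ.le i) (hf.stronglyMeasurable i) (hf.integrable i)]
    simp
  calc ∫ ω, f i ω * (f j ω - f i ω) ∂μ = ∫ ω, μ[f i * (f j - f i) | ℱ i] ω ∂μ :=
        (integral_condExp (ℱ.le i)).symm
    _ = ∫ ω, (f i * μ[f j - f i | ℱ i]) ω ∂μ := integral_congr_ae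
        (condExp_mul_of_stronglyMeasurable_left (hf.stronglyMeasurable i) hint
          ((hf.integrable j).sub (hf.integrable i)))
    _ = 0 := by
        rw [integral_eq_zero_of_ae]
        filter_upwards [hcond] with ω hω
        simp [hω]

theorem Martingale.integral_sq_eq_integral_sq_add_integral_sq_sub (hf : Martingale f ℱ μ)
    {i j : ι} (hij : i ≤ j) (hi : MemLp (f i) 2 μ) (hj : MemLp (f j) 2 μ) :
    ∫ ω, f j ω ^ 2 ∂μ = ∫ ω, f i ω ^ 2 ∂μ + ∫ ω, (f j ω - f i ω) ^ 2 ∂μ := by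
  have hexpand : (fun ω => f j ω ^ 2) =
      fun ω => f i ω ^ 2 + (2 * (f i ω * (f j ω - f i ω)) + (f j ω - f i ω) ^ 2) := by
    ext ω; ring
  have hcross : Integrable (fun ω => 2 * (f i ω * (f j ω - f i ω))) μ :=
    (hi.integrable_mul (hj.sub hi)).const_mul 2
  have hsq : Integrable (fun ω => (f j ω - f i ω) ^ 2) μ := (hj.sub hi).integrable_sq
  rw [hexpand, integral_add hi.integrable_sq (hcross.fun_add hsq), integral_add hcross hsq,
    integral_const_mul,
    hf.integral_mul_sub_eq_zero hij hi hj]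
  ring

end Preorder

theorem Submartingale.measure_exists_ge_le [IsFiniteMeasure μ] {ℱ : Filtration ℕ m}
    {g : ℕ → Ω → ℝ} (hg : Submartingale g ℱ μ) (hg0 : 0 ≤ g) {ε : ℝ} (hε : 0 < ε) (N : ℕ) :
    μ {ω | ∃ n ≤ N, ε ≤ g n ω} ≤ ENNReal.ofReal ((∫ ω, g N ω ∂μ) / ε) := by
  lift ε to ℝ≥0 using hε.le
  have hset : {ω | ∃ n ≤ N, (ε : ℝ) ≤ g n ω} =
      {ω | (ε : ℝ) ≤ (Finset.range (N + 1)).sup' Finset.nonempty_range_add_one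
        fun k => g k ω} := by
    ext ω
    simp [Finset.le_sup'_iff]
  have hdoob := maximal_ineq hg hg0 (ε := ε) N
  rw [← hset] at hdoob
  rw [ENNReal.ofReal_div_of_pos hε, ENNReal.le_div_iff_mul_le (.inl (by simpa using hε.ne'))
    (.inr ENNReal.ofReal_ne_top), mul_comm, ENNReal.ofReal_coe_nnreal]
  exact hdoob.trans (ENNReal.ofReal_le_ofReal
    (setIntegral_le_integral (hg.integrable N) (ae_of_all _ fun ω => hg0 N ω)))

section UnitIncrements

variable {ℱ : Filtration ℕ m} {f : ℕ → Ω → ℝ}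

variable (hf : Martingale f ℱ μ) (h0 : ∀ ω, f 0 ω = 0)
  (hstep : ∀ n ω, |f (n + 1) ω - f n ω| ≤ 1)
include hf h0 hstep

theorem Martingale.memLp_of_abs_sub_le_one [IsFiniteMeasure μ] (p : ℝ≥0∞) (n : ℕ) :
    MemLp (f n) p μ :=
  MemLp.of_bound (hf.integrable n).aestronglyMeasurable n
    (ae_of_all _ fun ω => abs_le_of_abs_sub_le_one h0 hstep n ω)

theorem Martingale.integral_sq_le_of_abs_sub_le_one [IsProbabilityMeasure μ] (n : ℕ) :
    ∫ ω, f n ω ^ 2 ∂μ ≤ n := by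
  have hL2 := hf.memLp_of_abs_sub_le_one h0 hstep 2
  induction n with
  | zero => simp [h0]
  | succ n ih =>
    have hincr : ∫ ω, (f (n + 1) ω - f n ω) ^ 2 ∂μ ≤ 1 := by
      calc ∫ ω, (f (n + 1) ω - f n ω) ^ 2 ∂μ ≤ ∫ _, (1 : ℝ) ∂μ :=
            integral_mono ((hL2 (n + 1)).sub (hL2 n)).integrable_sq (integrable_const 1)
              fun ω => sq_le_one_iff_abs_le_one _ |>.2 (hstep n ω)
        _ = 1 := by simp
    rw [hf.integral_sq_eq_integral_sq_add_integral_sq_sub n.le_succ (hL2 n) (hL2 (n + 1))]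
    push_cast
    linarith

theorem Martingale.integral_abs_le_sqrt_of_abs_sub_le_one [IsProbabilityMeasure μ] (n : ℕ) :
    ∫ ω, |f n ω| ∂μ ≤ √n := by
  have hvar := ProbabilityTheory.variance_nonneg |f n| μ
  rw [ProbabilityTheory.variance_eq_sub (hf.memLp_of_abs_sub_le_one h0 hstep 2 n).abs] at hvar
  refine (le_abs_self _).trans (Real.abs_le_sqrt ?_)
  calc (∫ ω, |f n ω| ∂μ) ^ 2 ≤ ∫ ω, |f n ω| ^ 2 ∂μ := by simpa using hvar
    _ = ∫ ω, f n ω ^ 2 ∂μ := by simp_rw [sq_abs]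
    _ ≤ n := hf.integral_sq_le_of_abs_sub_le_one h0 hstep n

theorem Martingale.measure_exists_ge_le_sqrt_div [IsProbabilityMeasure μ] {ε : ℝ}
    (hε : 0 < ε) (N : ℕ) :
    μ {ω | ∃ n ≤ N, ε ≤ f n ω} ≤ ENNReal.ofReal (√N / ε) := by
  have hpos : Submartingale (fun n ω => max (f n ω) 0) ℱ μ := hf.submartingale.pos
  have hset : {ω | ∃ n ≤ N, ε ≤ f n ω} = {ω | ∃ n ≤ N, ε ≤ max (f n ω) 0} := by
    ext ω
    simp only [Set.mem_ofPred_eq, le_max_iff, not_le.2 hε, or_false]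
  rw [hset]
  refine (hpos.measure_exists_ge_le (fun n ω => le_max_right _ _) hε N).trans
    (ENNReal.ofReal_le_ofReal (div_le_div_of_nonneg_right ?_ hε.le))
  calc ∫ ω, max (f N ω) 0 ∂μ ≤ ∫ ω, |f N ω| ∂μ :=
        integral_mono (hpos.integrable N) (hf.integrable N).abs
          fun ω => max_le (le_abs_self _) (abs_nonneg _)
    _ ≤ √N := hf.integral_abs_le_sqrt_of_abs_sub_le_one h0 hstep N

theorem Martingale.measure_exists_ge_abs_le_two_mul_sqrt_div [IsProbabilityMeasure μ] {ε : ℝ}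
    (hε : 0 < ε) (N : ℕ) :
    μ {ω | ∃ n ≤ N, ε ≤ |f n ω|} ≤ ENNReal.ofReal (2 * √N / ε) := by
  have hneg : μ {ω | ∃ n ≤ N, ε ≤ (-f) n ω} ≤ ENNReal.ofReal (√N / ε) :=
    hf.neg.measure_exists_ge_le_sqrt_div (by simp [h0])
      (fun n ω => by simpa [abs_sub_comm, sub_neg_eq_add, neg_add_eq_sub] using hstep n ω) hε N
  calc μ {ω | ∃ n ≤ N, ε ≤ |f n ω|}
      ≤ μ ({ω | ∃ n ≤ N, ε ≤ f n ω} ∪ {ω | ∃ n ≤ N, ε ≤ (-f) n ω}) := by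
        refine measure_mono fun ω ⟨n, hn, hε⟩ => ?_
        rcases le_abs.1 hε with h | h
        exacts [Or.inl ⟨n, hn, h⟩, Or.inr ⟨n, hn, h⟩]
    _ ≤ ENNReal.ofReal (√N / ε) + ENNReal.ofReal (√N / ε) :=
        (measure_union_le _ _).trans
          (add_le_add (hf.measure_exists_ge_le_sqrt_div h0 hstep hε N) hneg)
    _ = ENNReal.ofReal (2 * √N / ε) := by
        rw [← ENNReal.ofReal_add (by positivity) (by positivity)]
        ring_nf

end UnitIncrements

theorem Martingale.measure_exists_ge_norm_le [Fintype ι] [IsProbabilityMeasure μ]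
    {ℱ : Filtration ℕ m} {X : ℕ → Ω → EuclideanSpace ℝ ι} (hX : Martingale X ℱ μ) (h0 : ∀ ω, X 0 ω = 0)
    (hstep : ∀ n ω, ‖X (n + 1) ω - X n ω‖ ≤ 1) {r : ℝ} (hr : 0 < r) (N : ℕ) :
    μ {ω | ∃ n ≤ N, r ≤ ‖X n ω‖} ≤
      ENNReal.ofReal (2 * Fintype.card ι * √(Fintype.card ι) * √N / r) := by
  set ε := r / √(Fintype.card ι)
  have hcoord (i : ι) :
      μ {ω | ∃ n ≤ N, ε ≤ |X n ω i|} ≤ ENNReal.ofReal (2 * √N / ε) :=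
    (hX.continuousLinearMap_comp (EuclideanSpace.proj i)).measure_exists_ge_abs_le_two_mul_sqrt_div
      (by simp [h0]) (fun n ω => (PiLp.norm_apply_le _ i).trans (hstep n ω))
      (div_pos hr (by simpa using Fintype.card_pos_iff.2 ⟨i⟩)) N
  have hsubset : {ω | ∃ n ≤ N, r ≤ ‖X n ω‖} ⊆ ⋃ i, {ω | ∃ n ≤ N, ε ≤ |X n ω i|} := by
    rintro ω ⟨n, hn, hnorm⟩
    obtain ⟨i, hi⟩ := (X n ω).exists_norm_le_sqrt_card_mul_abs (norm_pos_iff.1 (hr.trans_le hnorm))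
    have hcard : 0 < √(Fintype.card ι) := by simpa using Fintype.card_pos_iff.2 ⟨i⟩
    exact Set.mem_iUnion.2 ⟨i, n, hn, (div_le_iff₀' hcard).2 (hnorm.trans hi)⟩
  calc μ {ω | ∃ n ≤ N, r ≤ ‖X n ω‖}
      ≤ ∑ i, μ {ω | ∃ n ≤ N, ε ≤ |X n ω i|} :=
        (measure_mono hsubset).trans (measure_iUnion_fintype_le _ _)
    _ ≤ ∑ _i : ι, ENNReal.ofReal (2 * √N / ε) := Finset.sum_le_sum fun i _ => hcoord i
    _ = ENNReal.ofReal (2 * Fintype.card ι * √(Fintype.card ι) * √N / r) := by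
        simp only [Finset.sum_const, Finset.card_univ, nsmul_eq_mul, ← ENNReal.ofReal_natCast,
          ← ENNReal.ofReal_mul (Nat.cast_nonneg _), ε, div_div_eq_mul_div]
        ring_nf

end MeasureTheory

/-- Doob-type estimate: for a martingale `(X_n)` in `ℤ^d` with unit steps started at the
origin, `P(τ_{n₀} ≤ k R²) ≤ C √k / n₀`, where `τ_{n₀}` is the exit time from `B_{n₀ R}`
and `C` depends only on `d`. -/
theorem stmt9 (d : ℕ) : ∃ C : ℝ, 0 < C ∧
    ∀ (Ω : Type) [m : MeasurableSpace Ω] (μ : Measure Ω) [IsProbabilityMeasure μ]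
      (ℱ : Filtration ℕ m) (X : ℕ → Ω → EuclideanSpace ℝ (Fin d)),
      Martingale X ℱ μ →
      (∀ ω, X 0 ω = 0) →
      (∀ n ω i, ∃ z : ℤ, X n ω i = z) →
      (∀ n ω, ‖X (n + 1) ω - X n ω‖ = 1) →
      ∀ (R : ℝ), 1 ≤ R → ∀ (k : ℝ), 0 < k → ∀ (n₀ : ℕ), 1 ≤ n₀ →
        μ {ω | ∃ n : ℕ, (n : ℝ) ≤ k * R ^ 2 ∧ (n₀ : ℝ) * R ≤ ‖X n ω‖}
          ≤ ENNReal.ofReal (C * Real.sqrt k / n₀) := by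
  refine ⟨2 * d * √d + 1, by positivity, ?_⟩
  intro Ω m μ _ ℱ X hX h0 _ hstep R hR k hk n₀ hn₀
  have hn₀R : 1 ≤ (n₀ : ℝ) * R := one_le_mul_of_one_le_of_one_le (by exact_mod_cast hn₀) hR
  have hN : √(⌊k * R ^ 2⌋₊ : ℝ) ≤ √k * R := by
    calc √(⌊k * R ^ 2⌋₊ : ℝ) ≤ √(k * R ^ 2) := Real.sqrt_le_sqrt (Nat.floor_le (by positivity))
      _ = √k * R := by rw [Real.sqrt_mul hk.le, Real.sqrt_sq (by linarith)]
  calc μ {ω | ∃ n : ℕ, (n : ℝ) ≤ k * R ^ 2 ∧ (n₀ : ℝ) * R ≤ ‖X n ω‖}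
      ≤ μ {ω | ∃ n ≤ ⌊k * R ^ 2⌋₊, (n₀ : ℝ) * R ≤ ‖X n ω‖} :=
        measure_mono fun ω ⟨n, hn, hnorm⟩ => ⟨n, Nat.le_floor hn, hnorm⟩
    _ ≤ ENNReal.ofReal (2 * d * √d * √(⌊k * R ^ 2⌋₊ : ℝ) / (n₀ * R)) := by
        simpa only [Fintype.card_fin] using hX.measure_exists_ge_norm_le h0
          (fun n ω => (hstep n ω).le) (by positivity) ⌊k * R ^ 2⌋₊
    _ ≤ ENNReal.ofReal ((2 * d * √d + 1) * √k / n₀) := by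
        refine ENNReal.ofReal_le_ofReal ?_
        have hR0 : R ≠ 0 := by positivity
        calc 2 * d * √d * √(⌊k * R ^ 2⌋₊ : ℝ) / (n₀ * R) ≤ 2 * d * √d * (√k * R) / (n₀ * R) := by
              gcongr
          _ = 2 * d * √d * √k / n₀ := by field_simp
          _ ≤ (2 * d * √d + 1) * √k / n₀ := by gcongr; linarith
end

section
/- Suppose T is a stopping time for a Markov chain (X_n) on ℤ^d (on a fixed environment) such that for stopping times τ_k = inf{n : X_n ∉ B_{kR}(x)} one has P^x(τ_k < T) ≤ C e^{−ck} for all k ≥ 1, and E^z[τ_k] ≤ (k+1)² R² for all z ∈ B_{kR}(x). Then E^x[T] ≤ C' R² for a constant C' depending only on c, C. -/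
/-!
Let `τ_k` be the exit time from the ball of radius `kR`. Nearest-neighbour steps force `τ_k ≥ k`
and put the exit position `X_{τ_k}` inside the ball of radius `(k+1)R`. Pathwise,
`T ≤ τ_1 + ∑_{k ≥ 1} 1_{τ_k < T} · τ_{k+1} ∘ θ_{τ_k}`, and by the strong Markov property at `τ_k`
the `k`-th term has mean at most `(k+2)² R² · P^x(τ_k < T) ≤ (k+2)² R² C e^{-ck}`. Summing gives
`E^x[T] ≤ (4 + C ∑_k (k+3)² e^{-c(k+1)}) R²`.
-/

open MeasureTheory
open scoped ENNReal

noncomputable def zdist (d : ℕ) (x y : Fin d → ℤ) : ℝ :=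
  Real.sqrt (∑ i, ((x i - y i : ℤ) : ℝ) ^ 2)

noncomputable def firstTime (p : ℕ → Prop) : ℕ∞ :=
  ⨅ n : {n // p n}, (n.1 : ℕ∞)

section FirstTime

variable {p q : ℕ → Prop}

theorem firstTime_le {n : ℕ} (h : p n) : firstTime p ≤ n :=
  iInf_le (fun m : {m // p m} => (m.1 : ℕ∞)) ⟨n, h⟩

theorem le_firstTime {a : ℕ∞} (h : ∀ n, p n → a ≤ n) : a ≤ firstTime p :=
  le_iInf fun m => h m.1 m.2

theorem not_of_lt_firstTime {n : ℕ} (h : (n : ℕ∞) < firstTime p) : ¬ p n :=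
  fun hn => (firstTime_le hn).not_gt h

theorem firstTime_eq_find [DecidablePred p] (h : ∃ n, p n) : firstTime p = Nat.find h :=
  le_antisymm (firstTime_le (Nat.find_spec h))
    (le_firstTime fun _ hn => by exact_mod_cast Nat.find_min' h hn)

theorem firstTime_toNat (h : firstTime p ≠ ⊤) : p (firstTime p).toNat := by
  classical
  by_cases hp : ∃ n, p n
  · simpa [firstTime_eq_find hp] using Nat.find_spec hp
  · exact absurd (top_le_iff.mp (le_firstTime fun n hn => (hp ⟨n, hn⟩).elim)) h

theorem firstTime_mono (h : ∀ n, q n → p n) : firstTime p ≤ firstTime q :=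
  le_firstTime fun _ hn => firstTime_le (h _ hn)

theorem firstTime_le_add_shift (t : ℕ) : firstTime p ≤ t + firstTime fun n => p (n + t) := by
  by_cases h : firstTime (fun n => p (n + t)) = ⊤
  · simp [h]
  · calc firstTime p ≤ (((firstTime fun n => p (n + t)).toNat + t : ℕ) : ℕ∞) :=
          firstTime_le (firstTime_toNat h)
      _ = t + firstTime fun n => p (n + t) := by rw [Nat.cast_add, ENat.natCast_toNat h, add_comm]

theorem measurable_toENNReal_firstTime {Ω : Type*} [MeasurableSpace Ω] {p : Ω → ℕ → Prop}
    (hp : ∀ n, MeasurableSet {ω | p ω n}) : Measurable fun ω => (firstTime (p ω) : ℝ≥0∞) := by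
  classical
  simp only [firstTime, iInf_subtype, ENat.toENNReal_iInf]
  simp only [iInf_eq_if]
  exact Measurable.iInf fun n => Measurable.ite (hp n) measurable_const measurable_const

end FirstTime

/-- `T` need not be measurable, so the increments are summed for `min f (τ k)`, where `f ≤ T` is a
measurable function with the same integral. -/
theorem lintegral_le_of_step_le {Ω : Type*} [MeasurableSpace Ω] {μ : Measure Ω}
    {τ : ℕ → Ω → ℝ≥0∞} {T : Ω → ℝ≥0∞} (G : ℕ → Ω → ℝ≥0∞)
    (hτ : ∀ k, Measurable (τ k)) (hmono : Monotone τ) (hT : ∀ᵐ ω ∂μ, T ω ≤ ⨆ k, τ k ω)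
    (hincr : ∀ k ω, τ k ω < T ω → τ (k + 1) ω ≤ τ k ω + G k ω) :
    ∫⁻ ω, T ω ∂μ ≤ ∫⁻ ω, τ 0 ω ∂μ + ∑' k, ∫⁻ ω, {ω | τ k ω < T ω}.indicator (G k) ω ∂μ := by
  obtain ⟨f, hf, hfT, hfT_eq⟩ := exists_measurable_le_lintegral_eq μ T
  set ψ : ℕ → Ω → ℝ≥0∞ := fun k ω => min (f ω) (τ k ω)
  have hψ_step (k : ℕ) (ω : Ω) :
      ψ (k + 1) ω ≤ ψ k ω + {ω | τ k ω < T ω}.indicator (G k) ω := by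
    rcases le_or_gt (f ω) (τ k ω) with hfτ | hτf
    · exact (min_le_left _ _).trans ((min_eq_left hfτ).ge.trans le_self_add)
    · have hτT : τ k ω < T ω := hτf.trans_le (hfT ω)
      rw [Set.indicator_of_mem (show ω ∈ {ω | τ k ω < T ω} from hτT)]
      simp only [ψ, min_eq_right hτf.le]
      exact (min_le_right _ _).trans (hincr k ω hτT)
  have hψ_le (k : ℕ) : ∫⁻ ω, ψ k ω ∂μ ≤
      ∫⁻ ω, τ 0 ω ∂μ + ∑ j ∈ Finset.range k, ∫⁻ ω, {ω | τ j ω < T ω}.indicator (G j) ω ∂μ := by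
    induction k with
    | zero => simpa using lintegral_mono fun ω => min_le_right (f ω) (τ 0 ω)
    | succ k ih =>
      calc ∫⁻ ω, ψ (k + 1) ω ∂μ
          ≤ ∫⁻ ω, ψ k ω ∂μ + ∫⁻ ω, {ω | τ k ω < T ω}.indicator (G k) ω ∂μ := by
            rw [← lintegral_add_left (hf.min (hτ k))]
            exact lintegral_mono (hψ_step k)
        _ ≤ _ := by rw [Finset.sum_range_succ, ← add_assoc]; gcongr
  have hψ_sup : ∀ᵐ ω ∂μ, ⨆ k, ψ k ω = f ω := by
    filter_upwards [hT] with ω hω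
    exact (inf_iSup_eq (f ω) fun k => τ k ω).symm.trans (inf_eq_left.mpr ((hfT ω).trans hω))
  calc ∫⁻ ω, T ω ∂μ = ∫⁻ ω, ⨆ k, ψ k ω ∂μ :=
        hfT_eq.trans (lintegral_congr_ae (hψ_sup.mono fun _ h => h.symm))
    _ = ⨆ k, ∫⁻ ω, ψ k ω ∂μ :=
      lintegral_iSup (fun k => hf.min (hτ k)) fun j k hjk ω => min_le_min le_rfl (hmono hjk ω)
    _ ≤ _ := iSup_le fun k => (hψ_le k).trans (by gcongr; exact ENNReal.sum_le_tsum _)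

section LatticePaths

variable {d : ℕ}

theorem zdist_eq_dist (a b : Fin d → ℤ) :
    zdist d a b = dist (WithLp.toLp 2 (fun i => (a i : ℝ)) : EuclideanSpace ℝ (Fin d))
      (WithLp.toLp 2 fun i => (b i : ℝ)) := by
  simp only [zdist, EuclideanSpace.dist_eq, Real.dist_eq, sq_abs, Int.cast_sub]

theorem zdist_self (a : Fin d → ℤ) : zdist d a a = 0 := by
  simp [zdist_eq_dist]

theorem zdist_triangle (a b e : Fin d → ℤ) : zdist d a e ≤ zdist d a b + zdist d b e := by
  simp only [zdist_eq_dist]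
  exact dist_triangle _ _ _

noncomputable def ballExitTime (d : ℕ) (R : ℝ) (x : Fin d → ℤ) (k : ℕ) (ω : ℕ → Fin d → ℤ) :
    ℕ∞ :=
  firstTime fun n => (k : ℝ) * R ≤ zdist d (ω n) x

def IsNearestNeighborPath (d : ℕ) (x : Fin d → ℤ) (ω : ℕ → Fin d → ℤ) : Prop :=
  ω 0 = x ∧ ∀ n, zdist d (ω (n + 1)) (ω n) ≤ 1

variable {R : ℝ} {x : Fin d → ℤ} {ω : ℕ → Fin d → ℤ}

theorem measurable_ballExitTime (d : ℕ) (R : ℝ) (x : Fin d → ℤ) (k : ℕ) :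
    Measurable fun ω => (ballExitTime d R x k ω : ℝ≥0∞) :=
  measurable_toENNReal_firstTime fun n =>
    measurableSet_le measurable_const
      ((measurable_of_countable fun z => zdist d z x).comp (measurable_pi_apply n))

theorem ballExitTime_mono (hR : 0 ≤ R) (ω : ℕ → Fin d → ℤ) :
    Monotone fun k => ballExitTime d R x k ω :=
  fun _ _ hjk => firstTime_mono fun _ hn =>
    (mul_le_mul_of_nonneg_right (Nat.cast_le.mpr hjk) hR).trans hn

theorem IsNearestNeighborPath.zdist_le (hω : IsNearestNeighborPath d x ω) (n : ℕ) :
    zdist d (ω n) x ≤ n := by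
  induction n with
  | zero => simp [hω.1, zdist_self]
  | succ n ih =>
    calc zdist d (ω (n + 1)) x ≤ zdist d (ω (n + 1)) (ω n) + zdist d (ω n) x :=
          zdist_triangle _ _ _
      _ ≤ n + 1 := by linarith [hω.2 n]
      _ = (n + 1 : ℕ) := by push_cast; ring

theorem IsNearestNeighborPath.natCast_le_ballExitTime (hω : IsNearestNeighborPath d x ω)
    (hR : 1 ≤ R) (k : ℕ) : (k : ℕ∞) ≤ ballExitTime d R x k ω :=
  le_firstTime fun n hn => by
    have : (k : ℝ) ≤ n := calc
      (k : ℝ) ≤ k * R := le_mul_of_one_le_right k.cast_nonneg hR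
      _ ≤ n := hn.trans (hω.zdist_le n)
    exact_mod_cast this

theorem IsNearestNeighborPath.zdist_ballExitTime_lt (hω : IsNearestNeighborPath d x ω)
    (hR : 1 ≤ R) {k : ℕ} (hfin : ballExitTime d R x k ω ≠ ⊤) :
    zdist d (ω (ballExitTime d R x k ω).toNat) x < (k + 1) * R := by
  rcases h : (ballExitTime d R x k ω).toNat with _ | s
  · rw [hω.1, zdist_self]; positivity
  · have hs : zdist d (ω s) x < k * R := not_le.mp <| not_of_lt_firstTime <| by
      change (s : ℕ∞) < ballExitTime d R x k ω
      rw [← ENat.natCast_toNat hfin, h]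
      exact_mod_cast s.lt_succ_self
    calc zdist d (ω (s + 1)) x ≤ zdist d (ω (s + 1)) (ω s) + zdist d (ω s) x :=
          zdist_triangle _ _ _
      _ < 1 + k * R := by linarith [hω.2 s]
      _ ≤ (k + 1) * R := by linarith

theorem IsNearestNeighborPath.iSup_ballExitTime_eq_top (hω : IsNearestNeighborPath d x ω)
    (hR : 1 ≤ R) : ⨆ k, (ballExitTime d R x k ω : ℝ≥0∞) = ⊤ :=
  top_le_iff.mp <| ENNReal.iSup_natCast.symm.le.trans <| iSup_mono fun k =>
    ENat.toENNReal_le.mpr (hω.natCast_le_ballExitTime hR k)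

theorem ballExitTime_le_add_shift {j : ℕ} (hfin : ballExitTime d R x j ω ≠ ⊤) (k : ℕ) :
    ballExitTime d R x k ω ≤
      ballExitTime d R x j ω +
        ballExitTime d R x k fun n => ω (n + (ballExitTime d R x j ω).toNat) :=
  (firstTime_le_add_shift _).trans_eq (by rw [ENat.natCast_toNat hfin]; rfl)

theorem lintegral_le_ballExitTime_add_tsum {μ : Measure (ℕ → Fin d → ℤ)}
    (T : (ℕ → Fin d → ℤ) → ℕ∞) (hR : 1 ≤ R) (hpath : ∀ᵐ ω ∂μ, IsNearestNeighborPath d x ω) :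
    ∫⁻ ω, (T ω : ℝ≥0∞) ∂μ ≤ ∫⁻ ω, (ballExitTime d R x 1 ω : ℝ≥0∞) ∂μ +
      ∑' k, ∫⁻ ω, {ω | (ballExitTime d R x (k + 1) ω : ℝ≥0∞) < T ω}.indicator
        (fun ω => ballExitTime d R x (k + 2) fun n => ω (n + (ballExitTime d R x (k + 1) ω).toNat))
        ω ∂μ := by
  have hmono (ω : ℕ → Fin d → ℤ) : Monotone fun k => (ballExitTime d R x k ω : ℝ≥0∞) :=
    ENat.toENNReal_mono.comp (ballExitTime_mono (by linarith) ω)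
  refine lintegral_le_of_step_le _ (fun k => measurable_ballExitTime d R x (k + 1))
    (fun j k hjk ω => hmono ω (by omega)) (hpath.mono fun ω hω => ?_) fun k ω hk => ?_
  · rw [(hmono ω).iSup_nat_add 1, hω.iSup_ballExitTime_eq_top hR]
    exact le_top
  · rw [← ENat.toENNReal_add]
    exact ENat.toENNReal_mono (ballExitTime_le_add_shift (ENat.toENNReal_lt.mp hk).ne_top _)

theorem lintegral_indicator_ballExitTime_shift_le {P : (Fin d → ℤ) → Measure (ℕ → Fin d → ℤ)}
    {T : (ℕ → Fin d → ℤ) → ℕ∞} {k : ℕ} {b : ℝ≥0∞} (hR : 1 ≤ R)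
    (hpath : ∀ᵐ ω ∂P x, IsNearestNeighborPath d x ω)
    (hmarkov : ∀ g : (ℕ → Fin d → ℤ) → ℝ≥0∞, Measurable g →
      (∫⁻ ω, (if ballExitTime d R x k ω < ⊤ ∧ ballExitTime d R x k ω < T ω
          then g (fun n => ω (n + (ballExitTime d R x k ω).toNat)) else 0) ∂P x)
        = ∫⁻ ω, (if ballExitTime d R x k ω < ⊤ ∧ ballExitTime d R x k ω < T ω
          then ∫⁻ ω', g ω' ∂P (ω (ballExitTime d R x k ω).toNat) else 0) ∂P x)
    (hmean : ∀ z, zdist d z x < ((k + 1 : ℕ) : ℝ) * R →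
      ∫⁻ ω, (ballExitTime d R x (k + 1) ω : ℝ≥0∞) ∂P z ≤ b) :
    ∫⁻ ω, {ω | (ballExitTime d R x k ω : ℝ≥0∞) < T ω}.indicator
        (fun ω => ballExitTime d R x (k + 1) fun n => ω (n + (ballExitTime d R x k ω).toNat)) ω ∂P x
      ≤ b * P x {ω | ballExitTime d R x k ω < T ω} := by
  set τ := ballExitTime d R x
  have hlt (ω) : (τ k ω : ℝ≥0∞) < T ω ↔ τ k ω < ⊤ ∧ τ k ω < T ω :=
    ENat.toENNReal_lt.trans ⟨fun h => ⟨h.trans_le le_top, h⟩, And.right⟩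
  calc _ = ∫⁻ ω, (if τ k ω < ⊤ ∧ τ k ω < T ω
          then (τ (k + 1) (fun n => ω (n + (τ k ω).toNat)) : ℝ≥0∞) else 0) ∂P x := by
        simp only [Set.indicator_apply, Set.mem_ofPred_eq, hlt]
    _ = ∫⁻ ω, (if τ k ω < ⊤ ∧ τ k ω < T ω
          then ∫⁻ ω', (τ (k + 1) ω' : ℝ≥0∞) ∂P (ω (τ k ω).toNat) else 0) ∂P x :=
        hmarkov _ (measurable_ballExitTime d R x (k + 1))
    _ ≤ ∫⁻ ω, {ω | τ k ω < T ω}.indicator (fun _ => b) ω ∂P x := by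
        refine lintegral_mono_ae (hpath.mono fun ω hω => ?_)
        split_ifs with h
        · rw [Set.indicator_of_mem (show ω ∈ {ω | τ k ω < T ω} from h.2)]
          exact hmean _ (by exact_mod_cast hω.zdist_ballExitTime_lt hR h.1.ne)
        · exact zero_le
    _ ≤ b * P x {ω | τ k ω < T ω} := lintegral_indicator_const_le _ _

end LatticePaths

theorem summable_sq_mul_exp_neg {c : ℝ} (hc : 0 < c) :
    Summable fun k : ℕ => ((k : ℝ) + 3) ^ 2 * Real.exp (-c * (k + 1)) := by
  have h (i : ℕ) := Real.summable_pow_mul_exp_neg_nat_mul i hc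
  refine ((((h 2).add ((h 1).mul_left 6)).add ((h 0).mul_left 9)).mul_left
    (Real.exp (-c))).congr fun k => ?_
  rw [show -c * ((k : ℝ) + 1) = -c * k + -c by ring, Real.exp_add]
  ring

/-- If `T` is a stopping time for a Markov chain `(X_n)` on `ℤ^d` such that
`P^x(τ_k < T) ≤ C e^{-ck}` and `E^z[τ_k] ≤ (k+1)² R²` for `z ∈ B_{kR}(x)`, where
`τ_k` is the exit time from `B_{kR}(x)`, then `E^x[T] ≤ C' R²` with `C' = C'(c, C)`.
The chain is encoded by a family of path measures `P z` (started at `z`, with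
nearest-neighbor steps), and the strong Markov property at the times `τ_k`, jointly with
the stopping-time property of `T`, is taken as a hypothesis. -/
theorem stmt10 (c C : ℝ) (hc : 0 < c) (hC : 0 < C) :
    ∃ C' : ℝ, 0 < C' ∧
    ∀ (d : ℕ) (R : ℝ), 1 ≤ R → ∀ (x : Fin d → ℤ)
      (P : (Fin d → ℤ) → Measure (ℕ → (Fin d → ℤ)))
      [∀ z, IsProbabilityMeasure (P z)]
      (T : (ℕ → (Fin d → ℤ)) → ℕ∞),
      -- exit times from the balls B_{kR}(x)
      let τ : ℕ → (ℕ → (Fin d → ℤ)) → ℕ∞ := fun k ω =>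
        ⨅ n : {n : ℕ // (k : ℝ) * R ≤ zdist d (ω n) x}, (n.1 : ℕ∞)
      -- the chain starts at z under P z
      (∀ z, (P z) {ω | ω 0 = z} = 1) →
      -- nearest-neighbor steps
      (∀ z, ∀ᵐ ω ∂ P z, ∀ n, zdist d (ω (n + 1)) (ω n) ≤ 1) →
      -- strong Markov property at τ_k on the event {τ_k < T} (T a stopping time)
      (∀ (z : Fin d → ℤ) (k : ℕ) (g : (ℕ → (Fin d → ℤ)) → ℝ≥0∞), Measurable g →
        (∫⁻ ω, (if τ k ω < ⊤ ∧ τ k ω < T ω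
            then g (fun n => ω (n + (τ k ω).toNat)) else 0) ∂ P z)
          = ∫⁻ ω, (if τ k ω < ⊤ ∧ τ k ω < T ω
            then ∫⁻ ω', g ω' ∂ P (ω ((τ k ω).toNat)) else 0) ∂ P z) →
      -- hypothesis: P^x(τ_k < T) ≤ C e^{-ck}
      (∀ k : ℕ, 1 ≤ k →
        (P x) {ω | τ k ω < T ω} ≤ ENNReal.ofReal (C * Real.exp (-c * k))) →
      -- hypothesis: E^z[τ_k] ≤ (k+1)² R² for z ∈ B_{kR}(x)
      (∀ (z : Fin d → ℤ) (k : ℕ), zdist d z x < (k : ℝ) * R →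
        (∫⁻ ω, ENat.toENNReal (τ k ω) ∂ P z)
          ≤ ENNReal.ofReal (((k : ℝ) + 1) ^ 2 * R ^ 2)) →
      (∫⁻ ω, ENat.toENNReal (T ω) ∂ P x) ≤ ENNReal.ofReal (C' * R ^ 2) := by
  set S := ∑' k : ℕ, ((k : ℝ) + 3) ^ 2 * Real.exp (-c * (k + 1))
  have hS : 0 ≤ S := tsum_nonneg fun k => by positivity
  refine ⟨4 + C * S, by positivity, ?_⟩
  intro d R hR x P _ T τ hstart hstep hmarkov hexit hmean
  have hpath : ∀ᵐ ω ∂P x, IsNearestNeighborPath d x ω :=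
    Filter.Eventually.and ((mem_ae_iff_prob_eq_one
      (measurableSet_eq_fun (measurable_pi_apply 0) measurable_const)).mpr (hstart x)) (hstep x)
  have hterm (k : ℕ) : ∫⁻ ω, {ω | (τ (k + 1) ω : ℝ≥0∞) < T ω}.indicator
      (fun ω => τ (k + 2) fun n => ω (n + (τ (k + 1) ω).toNat)) ω ∂P x
      ≤ ENNReal.ofReal (C * R ^ 2 * (((k : ℝ) + 3) ^ 2 * Real.exp (-c * (k + 1)))) := by
    refine (lintegral_indicator_ballExitTime_shift_le hR hpath (hmarkov x (k + 1))
      (hmean · (k + 2))).trans ?_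
    calc _ ≤ ENNReal.ofReal (((k + 2 : ℕ) + 1) ^ 2 * R ^ 2)
          * ENNReal.ofReal (C * Real.exp (-c * (k + 1 : ℕ))) := by gcongr; exact hexit _ (by omega)
      _ = _ := by rw [← ENNReal.ofReal_mul (by positivity)]; congr 1; push_cast; ring
  have hbase : ∫⁻ ω, (τ 1 ω : ℝ≥0∞) ∂P x ≤ ENNReal.ofReal (4 * R ^ 2) :=
    (hmean x 1 (by rw [zdist_self]; simp; linarith)).trans_eq (by norm_num)
  calc ∫⁻ ω, (T ω : ℝ≥0∞) ∂P x
      ≤ ENNReal.ofReal (4 * R ^ 2) +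
          ∑' k : ℕ, ENNReal.ofReal (C * R ^ 2 * (((k : ℝ) + 3) ^ 2 * Real.exp (-c * (k + 1)))) :=
        (lintegral_le_ballExitTime_add_tsum T hR hpath).trans
          (add_le_add hbase (ENNReal.tsum_le_tsum hterm))
    _ = ENNReal.ofReal ((4 + C * S) * R ^ 2) := by
        rw [← ENNReal.ofReal_tsum_of_nonneg (fun k => by positivity)
          ((summable_sq_mul_exp_neg hc).mul_left _), tsum_mul_left,
          ← ENNReal.ofReal_add (by positivity) (by positivity)]
        congr 1
        ring
end

section
/- Let u be a function on the closed discrete ball of radius R in ℤ^d such that every point x ∈ B_{R/2} (viewed in ℝ^d) is a convex combination of at most 2^d points y_i of the closed discrete ball of radius R/2 with |y_i − x| ≤ 1. If p is a polynomial of degree ≤ 2 with Hessian matrix M_p, then for all x ∈ 𝔹_{R/2}, |u(x) − p(x)| ≤ [u]_{1; 𝔹_{R/2+1}} + max over the closed discrete ball of radius R/2 of |u − p| + C R |M_p|, where [u]_{1;A} is the Lipschitz seminorm of u on A and C depends only on d. -/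
/-!
Write `u x - p x` as the `α`-average of `(u x - u yᵢ) + (u yᵢ - p yᵢ) + ½ Q (yᵢ - x)`, where `Q` is
the quadratic form of `M`. This holds because averaging `p` over points with barycenter `x` gives
`p x` plus the average of `½ Q (yᵢ - x)`: the affine part and the cross terms cancel. The three
summands are bounded by the Lipschitz seminorm (as `‖yᵢ - x‖ ≤ 1`), by the lattice maximum, and by
`½ ∑ |Mᵢⱼ| ≤ ½ R ∑ |Mᵢⱼ|`.
-/

open scoped BigOperators

/-- A lattice point viewed in Euclidean space. -/
noncomputable def coordsE (d : ℕ) (y : Fin d → ℤ) : EuclideanSpace ℝ (Fin d) :=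
  (WithLp.equiv 2 (Fin d → ℝ)).symm (fun i => (y i : ℝ))

/-- The Lipschitz seminorm `[u]_{1;𝔹_s}` of `u` on the Euclidean ball of radius `s`. -/
noncomputable def lipsem (d : ℕ) (u : EuclideanSpace ℝ (Fin d) → ℝ) (s : ℝ) : ℝ :=
  ⨆ q : {q : EuclideanSpace ℝ (Fin d) × EuclideanSpace ℝ (Fin d) //
      q.1 ∈ Metric.ball 0 s ∧ q.2 ∈ Metric.ball 0 s ∧ q.1 ≠ q.2},
    |u q.1.1 - u q.1.2| / ‖q.1.1 - q.1.2‖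

open Finset

theorem LinearMap.BilinForm.sum_mul_apply_self_eq {ι R E : Type*} [CommRing R] [AddCommGroup E]
    [Module R E] (B : LinearMap.BilinForm R E) {s : Finset ι} {α : ι → R} {y : ι → E} {x : E}
    (hα : ∑ i ∈ s, α i = 1) (hx : ∑ i ∈ s, α i • y i = x) :
    ∑ i ∈ s, α i * B (y i) (y i) = B x x + ∑ i ∈ s, α i * B (y i - x) (y i - x) := by
  have hl : ∑ i ∈ s, α i * B (y i) x = B x x := by
    simpa [map_sum, LinearMap.sum_apply] using congrArg (B · x) hx
  have hr : ∑ i ∈ s, α i * B x (y i) = B x x := by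
    simpa [map_sum] using congrArg (B x) hx
  simp only [map_sub, LinearMap.sub_apply, mul_sub, sum_sub_distrib, hl, hr, ← sum_mul, hα]
  ring

theorem abs_sum_mul_le_of_abs_le {ι : Type*} {s : Finset ι} {α t : ι → ℝ} {C : ℝ}
    (hα₀ : ∀ i ∈ s, 0 ≤ α i) (hα₁ : ∑ i ∈ s, α i = 1) (ht : ∀ i ∈ s, |t i| ≤ C) :
    |∑ i ∈ s, α i * t i| ≤ C := by
  simpa using (convex_closedBall (0 : ℝ) C).sum_mem hα₀ hα₁ (by simpa using ht)

variable {ι : Type*} [Fintype ι]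

noncomputable def Matrix.toEuclideanBilin (M : Matrix ι ι ℝ) :
    LinearMap.BilinForm ℝ (EuclideanSpace ℝ ι) :=
  LinearMap.mk₂ ℝ (fun v w => ∑ i, ∑ j, M i j * v i * w j)
    (fun _ _ _ => by simp only [PiLp.add_apply, mul_add, add_mul, sum_add_distrib])
    (fun _ _ _ => by
      simp only [PiLp.smul_apply, smul_eq_mul, mul_sum]
      exact sum_congr rfl fun _ _ => sum_congr rfl fun _ _ => by ring)
    (fun _ _ _ => by simp only [PiLp.add_apply, mul_add, sum_add_distrib])
    (fun _ _ _ => by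
      simp only [PiLp.smul_apply, smul_eq_mul, mul_sum]
      exact sum_congr rfl fun _ _ => sum_congr rfl fun _ _ => by ring)

theorem Matrix.toEuclideanBilin_apply (M : Matrix ι ι ℝ) (v w : EuclideanSpace ℝ ι) :
    M.toEuclideanBilin v w = ∑ i, ∑ j, M i j * v i * w j := by
  rfl

theorem Matrix.abs_toEuclideanBilin_apply_self_le (M : Matrix ι ι ℝ) (v : EuclideanSpace ℝ ι) :
    |M.toEuclideanBilin v v| ≤ (∑ i, ∑ j, |M i j|) * ‖v‖ ^ 2 := by
  rw [Matrix.toEuclideanBilin_apply, sum_mul]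
  refine (abs_sum_le_sum_abs _ _).trans (sum_le_sum fun i _ => ?_)
  rw [sum_mul]
  refine (abs_sum_le_sum_abs _ _).trans (sum_le_sum fun j _ => ?_)
  rw [abs_mul, abs_mul, mul_assoc, sq]
  gcongr
  · simpa using PiLp.norm_apply_le v i
  · simpa using PiLp.norm_apply_le v j

noncomputable def quadPoly (b : ℝ) (l : ι → ℝ) (M : Matrix ι ι ℝ) (z : EuclideanSpace ℝ ι) : ℝ :=
  b + ∑ i, l i * z i + 1 / 2 * ∑ i, ∑ j, M i j * z i * z j

theorem sum_mul_quadPoly_eq {κ : Type*} (b : ℝ) (l : ι → ℝ) (M : Matrix ι ι ℝ) {s : Finset κ}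
    {α : κ → ℝ} {y : κ → EuclideanSpace ℝ ι} {x : EuclideanSpace ℝ ι}
    (hα : ∑ k ∈ s, α k = 1) (hx : ∑ k ∈ s, α k • y k = x) :
    ∑ k ∈ s, α k * quadPoly b l M (y k)
      = quadPoly b l M x + 1 / 2 * ∑ k ∈ s, α k * M.toEuclideanBilin (y k - x) (y k - x) := by
  have hlin : ∑ k ∈ s, α k * ∑ i, l i * y k i = ∑ i, l i * x i := by
    rw [← hx]
    simp [mul_sum, sum_comm (s := s), mul_left_comm]
  have hquad := M.toEuclideanBilin.sum_mul_apply_self_eq hα hx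
  simp only [Matrix.toEuclideanBilin_apply] at hquad ⊢
  simp only [quadPoly, mul_add, sum_add_distrib, ← sum_mul, hα, hlin, mul_left_comm _ (1 / 2 : ℝ),
    ← mul_sum, hquad]
  ring

theorem abs_sub_quadPoly_le {κ : Type*} {s : Finset κ} (u : EuclideanSpace ℝ ι → ℝ) (b : ℝ)
    (l : ι → ℝ) (M : Matrix ι ι ℝ) {α : κ → ℝ} {y : κ → EuclideanSpace ℝ ι}
    {x : EuclideanSpace ℝ ι} (hα₀ : ∀ k ∈ s, 0 ≤ α k) (hα₁ : ∑ k ∈ s, α k = 1)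
    (hx : ∑ k ∈ s, α k • y k = x) (hyx : ∀ k ∈ s, ‖y k - x‖ ≤ 1) {L S : ℝ}
    (hL : ∀ k ∈ s, |u x - u (y k)| ≤ L) (hS : ∀ k ∈ s, |u (y k) - quadPoly b l M (y k)| ≤ S) :
    |u x - quadPoly b l M x| ≤ L + S + 1 / 2 * ∑ i, ∑ j, |M i j| := by
  set p := quadPoly b l M
  set Q := fun k => M.toEuclideanBilin (y k - x) (y k - x)
  have hsplit :
      u x - p x = ∑ k ∈ s, α k * ((u x - u (y k)) + (u (y k) - p (y k)) + 1 / 2 * Q k) := by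
    calc u x - p x
        = (∑ k ∈ s, α k) * u x - ∑ k ∈ s, α k * p (y k) + 1 / 2 * ∑ k ∈ s, α k * Q k := by
          rw [hα₁, sum_mul_quadPoly_eq b l M hα₁ hx]; ring
      _ = _ := by
          rw [sum_mul, ← sum_sub_distrib, mul_sum, ← sum_add_distrib]
          exact sum_congr rfl fun k _ => by ring
  rw [hsplit]
  refine abs_sum_mul_le_of_abs_le hα₀ hα₁ fun k hk => ?_
  have hQ : |Q k| ≤ ∑ i, ∑ j, |M i j| :=
    (M.abs_toEuclideanBilin_apply_self_le _).trans
      (mul_le_of_le_one_right (by positivity) (pow_le_one₀ (norm_nonneg _) (hyx k hk)))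
  have h := abs_add_three (u x - u (y k)) (u (y k) - p (y k)) (1 / 2 * Q k)
  rw [abs_mul, abs_of_pos (one_half_pos (α := ℝ))] at h
  linarith [hL k hk, hS k hk]

theorem lipsem_nonneg (d : ℕ) (u : EuclideanSpace ℝ (Fin d) → ℝ) (s : ℝ) : 0 ≤ lipsem d u s :=
  Real.iSup_nonneg fun _ => by positivity

theorem LipschitzWith.abs_sub_le_lipsem_mul {d : ℕ} {u : EuclideanSpace ℝ (Fin d) → ℝ}
    {K : NNReal} (hu : LipschitzWith K u) {s : ℝ} {a c : EuclideanSpace ℝ (Fin d)}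
    (ha : a ∈ Metric.ball 0 s) (hc : c ∈ Metric.ball 0 s) :
    |u a - u c| ≤ lipsem d u s * ‖a - c‖ := by
  rcases eq_or_ne a c with rfl | hac
  · simp
  rw [← div_le_iff₀ (norm_pos_iff.2 (sub_ne_zero.2 hac)), lipsem]
  refine le_ciSup_of_le ⟨K, ?_⟩ ⟨(a, c), ha, hc, hac⟩ le_rfl
  rintro _ ⟨q, rfl⟩
  exact div_le_of_le_mul₀ (norm_nonneg _) K.2 (by simpa [dist_eq_norm] using hu.dist_le_mul _ _)

instance (d : ℕ) (r : ℝ) : Finite {y : Fin d → ℤ // ‖coordsE d y‖ ≤ r} := by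
  refine Set.Finite.to_subtype ((Set.finite_Icc (fun _ => ⌈-r⌉) (fun _ => ⌊r⌋)).subset ?_)
  intro y (hy : ‖coordsE d y‖ ≤ r)
  have hyi (i : Fin d) : |(y i : ℝ)| ≤ r := (PiLp.norm_apply_le (coordsE d y) i).trans hy
  exact ⟨fun i => Int.ceil_le.2 (abs_le.1 (hyi i)).1, fun i => Int.le_floor.2 (abs_le.1 (hyi i)).2⟩

/-- Comparison of a Lipschitz function `u` with a quadratic polynomial `p` on `𝔹_{R/2}`,
assuming every point of `𝔹_{R/2}` is a convex combination of at most `2^d` lattice points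
of the closed discrete ball of radius `R/2` at distance `≤ 1`:
`|u(x) - p(x)| ≤ [u]_{1;𝔹_{R/2+1}} + max_{B̄_{R/2} ∩ ℤ^d} |u - p| + C R |M_p|`. -/
theorem stmt12 (d : ℕ) : ∃ C : ℝ, 0 < C ∧
    ∀ (R : ℝ), 1 ≤ R →
    ∀ (u : EuclideanSpace ℝ (Fin d) → ℝ) (K : NNReal), LipschitzWith K u →
    (∀ x ∈ Metric.ball (0 : EuclideanSpace ℝ (Fin d)) (R / 2),
      ∃ (y : Fin (2 ^ d) → (Fin d → ℤ)) (α : Fin (2 ^ d) → ℝ),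
        (∀ i, 0 ≤ α i) ∧ (∑ i, α i = 1) ∧
        (∀ i, ‖coordsE d (y i)‖ ≤ R / 2 ∧ ‖coordsE d (y i) - x‖ ≤ 1) ∧
        x = ∑ i, α i • coordsE d (y i)) →
    ∀ (M : Matrix (Fin d) (Fin d) ℝ) (l : Fin d → ℝ) (b : ℝ),
      ∀ x ∈ Metric.ball (0 : EuclideanSpace ℝ (Fin d)) (R / 2),
        |u x - (b + (∑ i, l i * x i) +
            (1 / 2) * ∑ i, ∑ j, M i j * x i * x j)|
          ≤ lipsem d u (R / 2 + 1)
            + (⨆ y : {y : Fin d → ℤ // ‖coordsE d y‖ ≤ R / 2},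
                |u (coordsE d y.1) - (b + (∑ i, l i * (y.1 i : ℝ)) +
                  (1 / 2) * ∑ i, ∑ j, M i j * (y.1 i : ℝ) * (y.1 j : ℝ))|)
            + C * R * (∑ i, ∑ j, |M i j|) := by
  refine ⟨1 / 2, by norm_num, fun R hR u K hu hconv M l b x hx => ?_⟩
  obtain ⟨y, α, hα₀, hα₁, hy, hxy⟩ := hconv x hx
  have hL : ∀ i ∈ univ, |u x - u (coordsE d (y i))| ≤ lipsem d u (R / 2 + 1) := fun i _ => by
    have hyi : coordsE d (y i) ∈ Metric.ball 0 (R / 2 + 1) :=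
      mem_ball_zero_iff.2 (by linarith [(hy i).1])
    calc |u x - u (coordsE d (y i))| ≤ lipsem d u (R / 2 + 1) * ‖x - coordsE d (y i)‖ :=
          hu.abs_sub_le_lipsem_mul (Metric.ball_subset_ball (by linarith) hx) hyi
      _ ≤ lipsem d u (R / 2 + 1) := by
          rw [norm_sub_rev]
          exact mul_le_of_le_one_right (lipsem_nonneg d u _) (hy i).2
  have hS : ∀ i ∈ univ, |u (coordsE d (y i)) - quadPoly b l M (coordsE d (y i))| ≤
      ⨆ z : {z : Fin d → ℤ // ‖coordsE d z‖ ≤ R / 2},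
        |u (coordsE d z.1) - quadPoly b l M (coordsE d z.1)| := fun i _ =>
    le_ciSup_of_le (Set.finite_range _).bddAbove ⟨y i, (hy i).1⟩ le_rfl
  refine (abs_sub_quadPoly_le u b l M (fun i _ => hα₀ i) hα₁ hxy.symm (fun i _ => (hy i).2) hL
    hS).trans (add_le_add le_rfl ?_)
  rw [mul_assoc]
  gcongr
  exact le_mul_of_one_le_left (by positivity) hR
end

section
/- For R ≥ 2 and c > 0, define ν_R(r) = 1 + log(R / ((r+1) ∧ R)) for d = 2 and ν_R(r) = (r+1)^{2−d} for d ≥ 3. Then ∫_0^∞ e^{−2cr/R} ν_R(r)² r^{d−1} dr ≤ C μ(R)², where μ(R) = R for d = 2, μ(R) = R^{1/2} for d = 3, μ(R) = (1 ∨ log R)^{1/2} for d = 4, and μ(R) = 1 for d ≥ 5, and C depends only on d and c. -/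
/-!
Write `a = 2c/R` for the decay rate of the exponential. For `d ≥ 3` the bound `r ≤ r + 1`
gives `ν_R(r)² r^{d-1} ≤ (r+1)^{3-d}`, so it remains to bound `∫ e^{-ar} (r+1)^{3-d}`:
for `d = 3` this is `1/a = R/(2c)`; for `d = 4` one cuts at `r = R`, where
`∫_0^R dr/(r+1) = log(R+1)` and the tail is at most `1/(aR) = 1/(2c)`; for `d ≥ 5` the
weight `(r+1)^{3-d}` is integrable on its own. For `d = 2`, `(1 + log x)² ≤ 4x` gives
`ν_R(r)² r ≤ 4 (R/((r+1) ∧ R)) r ≤ 4(R + r)`, and `∫ e^{-ar}(R + r) = R/a + 1/a²`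
is of order `R²`.
-/

open MeasureTheory Set Real

theorem setLIntegral_ofReal_le_ofReal_setIntegral {α : Type*} [MeasurableSpace α]
    {μ : Measure α} {s : Set α} {f g : α → ℝ} (hs : MeasurableSet s)
    (hfg : ∀ x ∈ s, f x ≤ g x) (hg0 : ∀ x ∈ s, 0 ≤ g x) (hg : IntegrableOn g s μ) :
    ∫⁻ x in s, ENNReal.ofReal (f x) ∂μ ≤ ENNReal.ofReal (∫ x in s, g x ∂μ) := by
  rw [ofReal_integral_eq_lintegral_ofReal hg ((ae_restrict_iff' hs).2 (.of_forall hg0))]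
  exact setLIntegral_mono' hs fun x hx => ENNReal.ofReal_le_ofReal (hfg x hx)

theorem setLIntegral_Ioi_eq_Ioc_add_Ioi (f : ℝ → ENNReal) {a b : ℝ} (hab : a ≤ b) :
    ∫⁻ x in Ioi a, f x = (∫⁻ x in Ioc a b, f x) + ∫⁻ x in Ioi b, f x := by
  rw [← Ioc_union_Ioi_eq_Ioi hab, lintegral_union measurableSet_Ioi (Ioc_disjoint_Ioi le_rfl)]

section integrals

variable {a : ℝ}

theorem integral_exp_neg_mul_Ioi_zero (ha : 0 < a) : ∫ r in Ioi 0, exp (-a * r) = a⁻¹ := by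
  simpa using integral_rpow_mul_exp_neg_mul_Ioi one_pos ha

theorem integral_mul_exp_neg_mul_Ioi_zero (ha : 0 < a) :
    ∫ r in Ioi 0, r * exp (-a * r) = (a ^ 2)⁻¹ := by
  have h := integral_rpow_mul_exp_neg_mul_Ioi two_pos ha
  norm_num [Gamma_two] at h
  simpa using h

theorem integrableOn_mul_exp_neg_mul_Ioi_zero (ha : 0 < a) :
    IntegrableOn (fun r => r * exp (-a * r)) (Ioi 0) := by
  simpa using integrableOn_rpow_mul_exp_neg_mul_rpow (p := 1) (s := 1) (by norm_num) one_pos ha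

theorem integral_add_one_rpow_Ioi_zero {p : ℝ} (hp : p < -1) :
    ∫ r in Ioi 0, (r + 1) ^ p = -(p + 1)⁻¹ := by
  have h := (measurePreserving_add_right volume (1 : ℝ)).setIntegral_preimage_emb
    (measurableEmbedding_addRight 1) (fun r => r ^ p) (Ioi 1)
  rw [preimage_add_const_Ioi, sub_self] at h
  rw [h, integral_Ioi_rpow_of_lt hp one_pos, one_rpow, neg_div, one_div]

theorem integral_Ioc_zero_inv_add_one {R : ℝ} (hR : 0 ≤ R) :
    ∫ r in Ioc 0 R, (r + 1)⁻¹ = log (R + 1) := by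
  rw [← intervalIntegral.integral_of_le hR,
    intervalIntegral.integral_comp_add_right (fun r => r⁻¹) 1, integral_inv, zero_add, div_one]
  rw [uIcc_of_le (by linarith)]
  exact fun h => by linarith [h.1]

end integrals

theorem one_add_log_sq_le {x : ℝ} (hx : 1 ≤ x) : (1 + log x) ^ 2 ≤ 4 * x := by
  have hsqrt : 1 ≤ √x := one_le_sqrt.2 hx
  have hlog : log x = 2 * log √x := by
    rw [log_sqrt (by linarith)]; ring
  have h1 : log √x ≤ √x - 1 := log_le_sub_one_of_pos (by linarith)
  have h0 : 0 ≤ log x := log_nonneg hx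
  calc (1 + log x) ^ 2 ≤ (2 * √x) ^ 2 := by gcongr; linarith
    _ = 4 * x := by rw [mul_pow, sq_sqrt (by linarith)]; norm_num

theorem div_min_add_one_mul_le {R r : ℝ} (hR : 0 < R) (hr : 0 ≤ r) :
    R / min (r + 1) R * r ≤ R + r := by
  rcases le_total (r + 1) R with h | h
  · rw [min_eq_left h, div_mul_eq_mul_div, div_le_iff₀ (by linarith)]
    nlinarith
  · rw [min_eq_right h, div_self hR.ne', one_mul]
    linarith

theorem add_one_rpow_two_sub_sq_mul_pow_le {d : ℕ} (hd : 1 ≤ d) {r : ℝ} (hr : 0 ≤ r) :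
    ((r + 1) ^ ((2 : ℝ) - d)) ^ 2 * r ^ (d - 1) ≤ (r + 1) ^ ((3 : ℝ) - d) := by
  have hr1 : 0 < r + 1 := by linarith
  have hpow : r ^ (d - 1) ≤ (r + 1) ^ ((d : ℝ) - 1) := by
    rw [← Nat.cast_pred hd, rpow_natCast]
    exact pow_le_pow_left₀ hr (by linarith) _
  calc ((r + 1) ^ ((2 : ℝ) - d)) ^ 2 * r ^ (d - 1)
      ≤ ((r + 1) ^ ((2 : ℝ) - d)) ^ 2 * (r + 1) ^ ((d : ℝ) - 1) := by gcongr
    _ = (r + 1) ^ ((3 : ℝ) - d) := by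
      rw [← rpow_natCast, ← rpow_mul hr1.le, ← rpow_add hr1]
      ring_nf

theorem log_add_one_add_le_mul_max {R k : ℝ} (hR : 2 ≤ R) (hk : 0 ≤ k) :
    log (R + 1) + k ≤ (2 + k) * max 1 (log R) := by
  have hlog : log (R + 1) ≤ 2 * log R := by
    rw [← log_rpow (by linarith)]
    exact log_le_log (by linarith) (by norm_num; nlinarith)
  have hmax : k ≤ k * max 1 (log R) := le_mul_of_one_le_right hk (le_max_left _ _)
  nlinarith [le_max_right 1 (log R)]

section weights

variable {a : ℝ}

theorem lintegral_exp_neg_mul (ha : 0 < a) :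
    ∫⁻ r in Ioi 0, ENNReal.ofReal (exp (-a * r)) = ENNReal.ofReal a⁻¹ := by
  rw [← integral_exp_neg_mul_Ioi_zero ha, ofReal_integral_eq_lintegral_ofReal
    (exp_neg_integrableOn_Ioi 0 ha) (.of_forall fun r => (exp_pos _).le)]

theorem lintegral_exp_neg_mul_mul_one_add_log_sq_le (ha : 0 < a) {R : ℝ} (hR : 1 ≤ R) :
    ∫⁻ r in Ioi 0, ENNReal.ofReal (exp (-a * r) * (1 + log (R / min (r + 1) R)) ^ 2 * r)
      ≤ ENNReal.ofReal (4 * R / a + 4 / a ^ 2) := by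
  have hexp := exp_neg_integrableOn_Ioi 0 ha
  have hmul := integrableOn_mul_exp_neg_mul_Ioi_zero ha
  have hval : ∫ r in Ioi 0, (4 * R * exp (-a * r) + 4 * (r * exp (-a * r)))
      = 4 * R / a + 4 / a ^ 2 := by
    rw [integral_add (hexp.const_mul _) (hmul.const_mul _), integral_const_mul,
      integral_const_mul, integral_exp_neg_mul_Ioi_zero ha, integral_mul_exp_neg_mul_Ioi_zero ha]
    ring
  rw [← hval]
  refine setLIntegral_ofReal_le_ofReal_setIntegral measurableSet_Ioi
    (fun r (hr : 0 < r) => ?_) (fun r (hr : 0 < r) => by positivity)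
    ((hexp.const_mul _).add (hmul.const_mul _))
  have hm : 0 < min (r + 1) R := lt_min (by linarith) (by linarith)
  have hlog := one_add_log_sq_le ((one_le_div hm).2 (min_le_right _ _))
  have hdiv := div_min_add_one_mul_le (by linarith : 0 < R) hr.le
  calc exp (-a * r) * (1 + log (R / min (r + 1) R)) ^ 2 * r
      ≤ exp (-a * r) * (4 * (R / min (r + 1) R)) * r := by gcongr
    _ = 4 * exp (-a * r) * (R / min (r + 1) R * r) := by ring
    _ ≤ 4 * exp (-a * r) * (R + r) := by gcongr
    _ = 4 * R * exp (-a * r) + 4 * (r * exp (-a * r)) := by ring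

theorem lintegral_exp_neg_mul_mul_rpow_sq_mul_pow_le {d : ℕ} (hd : 1 ≤ d) (a : ℝ) :
    ∫⁻ r in Ioi 0, ENNReal.ofReal (exp (-a * r) * ((r + 1) ^ ((2 : ℝ) - d)) ^ 2 * r ^ (d - 1))
      ≤ ∫⁻ r in Ioi 0, ENNReal.ofReal (exp (-a * r) * (r + 1) ^ ((3 : ℝ) - d)) := by
  refine setLIntegral_mono' measurableSet_Ioi fun r hr => ENNReal.ofReal_le_ofReal ?_
  rw [mul_assoc]
  exact mul_le_mul_of_nonneg_left (add_one_rpow_two_sub_sq_mul_pow_le hd (le_of_lt hr))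
    (exp_pos _).le

theorem lintegral_exp_neg_mul_mul_inv_add_one_le (ha : 0 < a) {R : ℝ} (hR : 0 < R) :
    ∫⁻ r in Ioi 0, ENNReal.ofReal (exp (-a * r) * (r + 1)⁻¹)
      ≤ ENNReal.ofReal (log (R + 1) + (a * R)⁻¹) := by
  rw [setLIntegral_Ioi_eq_Ioc_add_Ioi _ hR.le,
    ENNReal.ofReal_add (log_nonneg (by linarith)) (by positivity)]
  gcongr ?_ + ?_
  · rw [← integral_Ioc_zero_inv_add_one hR.le]
    refine setLIntegral_ofReal_le_ofReal_setIntegral measurableSet_Ioc (fun r hr => ?_)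
      (fun r hr => ?_) ?_
    · have hr : 0 < r := hr.1
      exact mul_le_of_le_one_left (by positivity) (exp_le_one_iff.2 (by nlinarith))
    · have hr : 0 < r := hr.1
      positivity
    · refine ContinuousOn.integrableOn_Icc ?_ |>.mono_set Ioc_subset_Icc_self
      exact (continuous_add_const 1).continuousOn.inv₀ fun r hr =>
        (by linarith [hr.1] : 0 < r + 1).ne'
  · calc ∫⁻ r in Ioi R, ENNReal.ofReal (exp (-a * r) * (r + 1)⁻¹)
        ≤ ∫⁻ r in Ioi R, ENNReal.ofReal R⁻¹ * ENNReal.ofReal (exp (-a * r)) := by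
          refine setLIntegral_mono' measurableSet_Ioi fun r hr => ?_
          have hr : R < r := hr
          rw [← ENNReal.ofReal_mul (by positivity), mul_comm]
          gcongr
          linarith
      _ ≤ ∫⁻ r in Ioi 0, ENNReal.ofReal R⁻¹ * ENNReal.ofReal (exp (-a * r)) :=
          lintegral_mono_set (Ioi_subset_Ioi hR.le)
      _ = ENNReal.ofReal (a * R)⁻¹ := by
          rw [lintegral_const_mul' _ _ ENNReal.ofReal_ne_top, lintegral_exp_neg_mul ha,
            ← ENNReal.ofReal_mul (by positivity), mul_inv, mul_comm]

theorem lintegral_exp_neg_mul_mul_add_one_rpow_le (ha : 0 ≤ a) {p : ℝ} (hp : p < -1) :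
    ∫⁻ r in Ioi 0, ENNReal.ofReal (exp (-a * r) * (r + 1) ^ p)
      ≤ ENNReal.ofReal (-(p + 1)⁻¹) := by
  rw [← integral_add_one_rpow_Ioi_zero hp]
  refine setLIntegral_ofReal_le_ofReal_setIntegral measurableSet_Ioi
    (fun r (hr : 0 < r) => mul_le_of_le_one_left (by positivity)
      (exp_le_one_iff.2 (by nlinarith)))
    (fun r (hr : 0 < r) => by positivity) (integrableOn_add_rpow_Ioi_of_lt hp (by norm_num))

end weights

/-- For `R ≥ 2`, `c > 0`:
`∫_0^∞ e^{-2cr/R} ν_R(r)² r^{d-1} dr ≤ C μ(R)²` with the dimension-dependent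
`ν_R` and `μ`. -/
theorem stmt13 (d : ℕ) (hd : 2 ≤ d) (c : ℝ) (hc : 0 < c) :
    ∃ C : ℝ, 0 < C ∧ ∀ R : ℝ, 2 ≤ R →
      (∫⁻ r in Set.Ioi (0 : ℝ), ENNReal.ofReal
          (Real.exp (-2 * c * r / R) *
            (if d = 2 then 1 + Real.log (R / min (r + 1) R)
              else (r + 1) ^ ((2 : ℝ) - d)) ^ 2 * r ^ (d - 1)))
        ≤ ENNReal.ofReal (C *
            (if d = 2 then R else if d = 3 then R ^ ((1 : ℝ) / 2)
              else if d = 4 then (max 1 (Real.log R)) ^ ((1 : ℝ) / 2) else 1) ^ 2) := by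
  have hrate : ∀ R r : ℝ, -2 * c * r / R = -(2 * c / R) * r := fun R r => by ring
  rcases (by omega : d = 2 ∨ d = 3 ∨ d = 4 ∨ 5 ≤ d) with rfl | rfl | rfl | hd5
  · refine ⟨2 / c + 1 / c ^ 2, by positivity, fun R hR => ?_⟩
    have hR0 : 0 < R := by linarith
    simp only [hrate, if_true, pow_one, Nat.add_one_sub_one]
    refine (lintegral_exp_neg_mul_mul_one_add_log_sq_le (by positivity) (by linarith)).trans
      (ENNReal.ofReal_le_ofReal (le_of_eq ?_))
    field_simp
    ring
  · refine ⟨1 / (2 * c), by positivity, fun R hR => ?_⟩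
    have hR0 : 0 < R := by linarith
    simp only [hrate, Nat.reduceEqDiff, reduceIte]
    refine (lintegral_exp_neg_mul_mul_rpow_sq_mul_pow_le (by norm_num) _).trans ?_
    simp only [Nat.cast_ofNat, sub_self, rpow_zero, mul_one]
    rw [lintegral_exp_neg_mul (by positivity), ← sqrt_eq_rpow, sq_sqrt hR0.le]
    exact ENNReal.ofReal_le_ofReal (le_of_eq (by field_simp))
  · refine ⟨2 + 1 / (2 * c), by positivity, fun R hR => ?_⟩
    have hR0 : 0 < R := by linarith
    simp only [hrate, Nat.reduceEqDiff, reduceIte]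
    refine (lintegral_exp_neg_mul_mul_rpow_sq_mul_pow_le (by norm_num) _).trans ?_
    simp_rw [show (3 : ℝ) - (4 : ℕ) = -1 by norm_num, rpow_neg_one]
    refine (lintegral_exp_neg_mul_mul_inv_add_one_le (by positivity) hR0).trans
      (ENNReal.ofReal_le_ofReal ?_)
    rw [← sqrt_eq_rpow, sq_sqrt (by positivity), show 2 * c / R * R = 2 * c by field_simp,
      ← one_div]
    exact log_add_one_add_le_mul_max hR (by positivity)
  · refine ⟨1, one_pos, fun R hR => ?_⟩
    simp only [hrate, if_neg (by omega : d ≠ 2), if_neg (by omega : d ≠ 3),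
      if_neg (by omega : d ≠ 4)]
    have hd5' : (5 : ℝ) ≤ d := by exact_mod_cast hd5
    refine (lintegral_exp_neg_mul_mul_rpow_sq_mul_pow_le (by omega) _).trans
      ((lintegral_exp_neg_mul_mul_add_one_rpow_le (by positivity) (by linarith)).trans
      (ENNReal.ofReal_le_ofReal ?_))
    rw [one_pow, mul_one, ← inv_neg, inv_le_one₀ (by linarith)]
    linarith
end

section
/- Let d ≥ 2, R ≥ 1, c > 0, and define h(r,t) = r²/(r ∨ t) + r log((r/t) ∨ 1) for r ≥ 0, t > 0. Define v(r) = 1 + log(R/((r+1) ∧ R)) if d = 2 and v(r) = (r+1)^{2−d} if d ≥ 3. Then there exist constants C, c₂ > 0 depending only on d and c such that for all y ∈ ℤ^d, ∫_0^∞ (1+t)^{−d/2} exp(−t/R² − c·h(|y|, t)) dt ≤ C e^{−c₂|y|/R} v(|y|). -/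
/-!
Write `r = |y|` and `ρ = r + 1`. Since `r / R ≤ max (t / R²) (h r t)`, half of the exponent
already dominates `c₂ r / R`, and it remains to bound the integral with the halved exponent by
`C v(r)`. Split at `t = ρ²`. On `(0, ρ²]` the integrand is `O(ρ^{-d})`: for `t ≤ r` because
`h ≥ r`, and for `t > r` because `h ≥ r² / (1 + t)` and `e^{-x} ≤ d! / x^d`. Beyond `ρ²` the
integrand is at most `t^{-d/2}`, which integrates to `O(ρ^{2-d})` when `d ≥ 3`. For `d = 2` it is
at most `e^{-t/(2R²)} / t`, whose integral is `2 log (R / (ρ ∧ R))` up to `(ρ ∨ R)²` and `O(1)`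
beyond.
-/

open MeasureTheory

/-- `h(r,t) = r²/(r ∨ t) + r log((r/t) ∨ 1)`. -/
noncomputable def mfh (r t : ℝ) : ℝ :=
  r ^ 2 / max r t + r * Real.log (max (r / t) 1)

open Set Real
open scoped Nat ENNReal

lemma Real.exp_neg_le_factorial_div_pow {x : ℝ} (hx : 0 < x) (n : ℕ) :
    exp (-x) ≤ n ! / x ^ n := by
  rw [exp_neg, ← inv_div]
  exact inv_anti₀ (by positivity) (pow_div_factorial_le_exp _ hx.le n)

lemma setLIntegral_ofReal_le_integral {α : Type*} [MeasurableSpace α] {μ : Measure α}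
    {s : Set α} {f g : α → ℝ} (hs : MeasurableSet s) (hg : IntegrableOn g s μ)
    (hg₀ : ∀ t ∈ s, 0 ≤ g t) (hfg : ∀ t ∈ s, f t ≤ g t) :
    ∫⁻ t in s, ENNReal.ofReal (f t) ∂μ ≤ ENNReal.ofReal (∫ t in s, g t ∂μ) := by
  rw [ofReal_integral_eq_lintegral_ofReal hg (ae_restrict_of_forall_mem hs hg₀)]
  exact setLIntegral_mono' hs fun t ht ↦ ENNReal.ofReal_le_ofReal (hfg t ht)

lemma setLIntegral_Ioi_eq_add {μ : Measure ℝ} {f : ℝ → ℝ≥0∞} {a b : ℝ} (hab : a ≤ b) :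
    ∫⁻ t in Ioi a, f t ∂μ = (∫⁻ t in Ioc a b, f t ∂μ) + ∫⁻ t in Ioi b, f t ∂μ := by
  rw [← Ioc_union_Ioi_eq_Ioi hab, lintegral_union measurableSet_Ioi Ioc_disjoint_Ioi_same]

lemma mfh_ge_sq_div_max {r t : ℝ} (hr : 0 ≤ r) : r ^ 2 / max r t ≤ mfh r t :=
  le_add_of_nonneg_right (mul_nonneg hr (log_nonneg (le_max_right _ _)))

lemma mfh_nonneg {r t : ℝ} (hr : 0 ≤ r) (ht : 0 < t) : 0 ≤ mfh r t :=
  (div_nonneg (sq_nonneg r) (ht.le.trans (le_max_right r t))).trans (mfh_ge_sq_div_max hr)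

lemma le_mfh_of_le {r t : ℝ} (ht : 0 < t) (htr : t ≤ r) : r ≤ mfh r t := by
  have h := mfh_ge_sq_div_max (t := t) (ht.trans_le htr).le
  rwa [max_eq_left htr, sq, mul_div_cancel_right₀ _ (ht.trans_le htr).ne'] at h

lemma sq_div_le_mfh_of_le {r t : ℝ} (hr : 0 ≤ r) (hrt : r ≤ t) : r ^ 2 / t ≤ mfh r t := by
  simpa only [max_eq_right hrt] using mfh_ge_sq_div_max (t := t) hr

lemma div_le_max_mfh {R r t : ℝ} (hR : 1 ≤ R) (hr : 0 ≤ r) (ht : 0 < t) :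
    r / R ≤ max (t / R ^ 2) (mfh r t) := by
  have hR₀ : 0 < R := one_pos.trans_le hR
  rcases le_or_gt (r * R) t with hrt | hrt
  · refine le_max_of_le_left ?_
    rw [div_le_div_iff₀ hR₀ (by positivity)]
    nlinarith
  · have hr₀ : 0 < r := pos_of_mul_pos_left (ht.trans hrt) hR₀.le
    have hmax : max r t ≤ r * R := max_le (le_mul_of_one_le_right hr₀.le hR) hrt.le
    refine le_max_of_le_right (le_trans ?_ (mfh_ge_sq_div_max hr))
    calc r / R = r ^ 2 / (r * R) := by field_simp
      _ ≤ r ^ 2 / max r t := div_le_div_of_nonneg_left (sq_nonneg r)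
          (lt_max_of_lt_right ht) hmax

lemma min_mul_div_le_add_mfh {c R r t : ℝ} (hc : 0 < c) (hR : 1 ≤ R) (hr : 0 ≤ r)
    (ht : 0 < t) : min c 1 * (r / R) ≤ t / R ^ 2 + c * mfh r t := by
  have hmin := div_le_max_mfh hR hr ht
  have h₁ : 0 ≤ t / R ^ 2 := by positivity
  have h₂ := mfh_nonneg hr ht
  rcases max_choice (t / R ^ 2) (mfh r t) with h | h <;>
  · rw [h] at hmin
    nlinarith [min_le_left c 1, min_le_right c 1, le_min hc.le zero_le_one]

noncomputable def mfhKernel (d : ℕ) (b a r t : ℝ) : ℝ :=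
  (1 + t) ^ (-(d : ℝ) / 2) * exp (-b * t - a * mfh r t)

noncomputable def nearConst (d : ℕ) (a : ℝ) : ℝ :=
  exp a * d ! / (a / 4) ^ d

lemma nearConst_nonneg (d : ℕ) {a : ℝ} (ha : 0 < a) : 0 ≤ nearConst d a := by
  unfold nearConst; positivity

lemma Real.rpow_neg_natCast_div_two {x : ℝ} (hx : 0 ≤ x) (n : ℕ) :
    x ^ (-(n : ℝ) / 2) = (√x ^ n)⁻¹ := by
  rw [neg_div, rpow_neg hx, sqrt_eq_rpow, ← rpow_natCast, ← rpow_mul hx, one_div_mul_eq_div]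

section Kernel

variable {d : ℕ} {a b r t : ℝ}

lemma mfhKernel_le_rpow_mul_exp_neg_mfh (hb : 0 ≤ b) (ht : 0 ≤ t) :
    mfhKernel d b a r t ≤ (1 + t) ^ (-(d : ℝ) / 2) * exp (-(a * mfh r t)) := by
  unfold mfhKernel
  gcongr
  nlinarith

lemma mfhKernel_le_rpow_mul_exp_neg_mul (ha : 0 ≤ a) (hr : 0 ≤ r) (ht : 0 < t) :
    mfhKernel d b a r t ≤ (1 + t) ^ (-(d : ℝ) / 2) * exp (-b * t) := by
  unfold mfhKernel
  gcongr
  nlinarith [mfh_nonneg hr ht]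

lemma mfhKernel_le_rpow (ha : 0 ≤ a) (hb : 0 ≤ b) (hr : 0 ≤ r) (ht : 0 < t) :
    mfhKernel d b a r t ≤ t ^ (-(d : ℝ) / 2) := by
  calc mfhKernel d b a r t ≤ (1 + t) ^ (-(d : ℝ) / 2) * exp (-b * t) :=
        mfhKernel_le_rpow_mul_exp_neg_mul ha hr ht
    _ ≤ t ^ (-(d : ℝ) / 2) * 1 := by
        have hd₀ : -(d : ℝ) / 2 ≤ 0 := by have := d.cast_nonneg (α := ℝ); linarith
        exact mul_le_mul (rpow_le_rpow_of_nonpos ht (by linarith) hd₀)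
          (exp_le_one_iff.2 (by nlinarith)) (exp_nonneg _) (rpow_nonneg ht.le _)
    _ = t ^ (-(d : ℝ) / 2) := mul_one _

lemma mfhKernel_le_inv_mul_exp (hd : 2 ≤ d) (ha : 0 ≤ a) (hr : 0 ≤ r) (ht : 0 < t) :
    mfhKernel d b a r t ≤ t⁻¹ * exp (-b * t) := by
  refine (mfhKernel_le_rpow_mul_exp_neg_mul ha hr ht).trans ?_
  gcongr
  have hd' : (2 : ℝ) ≤ d := by exact_mod_cast hd
  calc (1 + t) ^ (-(d : ℝ) / 2) ≤ (1 + t) ^ (-1 : ℝ) :=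
        rpow_le_rpow_of_exponent_le (by linarith) (by linarith)
    _ ≤ t⁻¹ := by
        rw [rpow_neg_one]
        exact inv_anti₀ ht (by linarith)

lemma mfhKernel_le_nearConst_div (ha : 0 < a) (hb : 0 ≤ b) (hr : 0 ≤ r) (ht : 0 < t)
    (htr : t ≤ (r + 1) ^ 2) : mfhKernel d b a r t ≤ nearConst d a / (r + 1) ^ d := by
  set ρ := r + 1 with hρ
  have hρ₁ : 1 ≤ ρ := by linarith
  have hnear : ∀ x, a / 4 * ρ ≤ x → exp a * (d ! / x ^ d) ≤ nearConst d a / ρ ^ d := by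
    intro x hx
    calc exp a * (d ! / x ^ d) ≤ exp a * (d ! / (a / 4 * ρ) ^ d) := by gcongr
      _ = nearConst d a / ρ ^ d := by rw [nearConst, mul_pow]; ring
  refine (mfhKernel_le_rpow_mul_exp_neg_mfh hb ht.le).trans ?_
  rcases le_or_gt t r with htr' | hrt
  · calc (1 + t) ^ (-(d : ℝ) / 2) * exp (-(a * mfh r t)) ≤ 1 * exp (-(a * r)) := by
          gcongr
          · exact rpow_le_one_of_one_le_of_nonpos (by linarith)
              (by have := d.cast_nonneg (α := ℝ); linarith)
          · exact le_mfh_of_le ht htr'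
      _ = exp a * exp (-(a * ρ)) := by rw [one_mul, ← exp_add, hρ]; ring_nf
      _ ≤ exp a * (d ! / (a * ρ) ^ d) := by
          gcongr; exact exp_neg_le_factorial_div_pow (by positivity) d
      _ ≤ nearConst d a / ρ ^ d := hnear _ (by nlinarith)
  · set s := 1 + t with hs
    set x := a * ρ ^ 2 / (2 * s) with hx
    have hs₀ : 0 < s := by linarith
    -- `ρ² ≤ 2 r² + 2 s` turns the decay in `r² / s` into decay in `ρ² / s`, at the cost of `e^a`.
    have hexp : exp (-(a * mfh r t)) ≤ exp a * (d ! / x ^ d) := by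
      calc exp (-(a * mfh r t)) ≤ exp (a + -x) := by
            gcongr
            have h₁ : r ^ 2 / s ≤ mfh r t :=
              (div_le_div_of_nonneg_left (sq_nonneg r) ht (by linarith)).trans
                (sq_div_le_mfh_of_le hr hrt.le)
            have h₂ : ρ ^ 2 / (2 * s) ≤ r ^ 2 / s + 1 := by
              rw [div_le_iff₀ (by positivity)]
              field_simp
              nlinarith
            rw [hx, mul_div_assoc]
            nlinarith
        _ ≤ exp a * (d ! / x ^ d) := by
            rw [exp_add]; gcongr; exact exp_neg_le_factorial_div_pow (by positivity) d
    have hsqrt : √s ≤ 2 * ρ := sqrt_le_iff.2 ⟨by positivity, by nlinarith⟩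
    calc (1 + t) ^ (-(d : ℝ) / 2) * exp (-(a * mfh r t))
        ≤ (√s ^ d)⁻¹ * (exp a * (d ! / x ^ d)) := by
          rw [rpow_neg_natCast_div_two hs₀.le]; gcongr
      _ = exp a * (d ! / (√s * x) ^ d) := by rw [mul_pow]; field_simp
      _ ≤ nearConst d a / ρ ^ d := by
          refine hnear _ ?_
          calc a / 4 * ρ = a * ρ ^ 2 / (2 * (2 * ρ)) := by field_simp; ring
            _ ≤ a * ρ ^ 2 / (2 * √s) := by gcongr
            _ = √s * x := by rw [hx]; field_simp; rw [sq_sqrt hs₀.le]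

lemma setLIntegral_Ioc_mfhKernel_le (ha : 0 < a) (hb : 0 ≤ b) (hr : 0 ≤ r) :
    ∫⁻ t in Ioc 0 ((r + 1) ^ 2), ENNReal.ofReal (mfhKernel d b a r t)
      ≤ ENNReal.ofReal (nearConst d a * (r + 1) ^ ((2 : ℝ) - d)) := by
  refine (setLIntegral_ofReal_le_integral measurableSet_Ioc
    (integrableOn_const measure_Ioc_lt_top.ne)
    (fun _ _ ↦ div_nonneg (nearConst_nonneg d ha) (by positivity))
    fun t ht ↦ mfhKernel_le_nearConst_div ha hb hr ht.1 ht.2).trans_eq ?_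
  rw [setIntegral_const, volume_real_Ioc, rpow_sub (by positivity), rpow_two, rpow_natCast,
    sub_zero, max_eq_left (by positivity), smul_eq_mul]
  congr 1
  ring

lemma setLIntegral_Ioi_mfhKernel_le_rpow (hd : 3 ≤ d) (ha : 0 ≤ a) (hb : 0 ≤ b) (hr : 0 ≤ r)
    {A : ℝ} (hA : 0 < A) :
    ∫⁻ t in Ioi A, ENNReal.ofReal (mfhKernel d b a r t)
      ≤ ENNReal.ofReal (2 / (d - 2) * A ^ (1 - (d : ℝ) / 2)) := by
  have hd' : (3 : ℝ) ≤ d := by exact_mod_cast hd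
  have hexp : -(d : ℝ) / 2 < -1 := by linarith
  refine (setLIntegral_ofReal_le_integral measurableSet_Ioi (integrableOn_Ioi_rpow_of_lt hexp hA)
    (fun t ht ↦ rpow_nonneg (hA.trans ht).le _)
    fun t ht ↦ mfhKernel_le_rpow ha hb hr (hA.trans ht)).trans_eq ?_
  rw [integral_Ioi_rpow_of_lt hexp hA]
  congr 1
  have hd₂ : (d : ℝ) - 2 ≠ 0 := by linarith
  rw [show -(d : ℝ) / 2 + 1 = 1 - d / 2 by ring, show (1 : ℝ) - d / 2 = -((d - 2) / 2) by ring]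
  field_simp

lemma setLIntegral_Ioc_mfhKernel_le_log (hd : 2 ≤ d) (ha : 0 ≤ a) (hb : 0 ≤ b) (hr : 0 ≤ r)
    {A B : ℝ} (hA : 0 < A) (hAB : A ≤ B) :
    ∫⁻ t in Ioc A B, ENNReal.ofReal (mfhKernel d b a r t) ≤ ENNReal.ofReal (log (B / A)) := by
  have hint : IntegrableOn (fun t : ℝ ↦ t⁻¹) (Ioc A B) :=
    ((continuousOn_inv₀.mono fun _ ht ↦ (hA.trans_le ht.1).ne').integrableOn_Icc).mono_set
      Ioc_subset_Icc_self
  refine (setLIntegral_ofReal_le_integral measurableSet_Ioc hint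
    (fun t ht ↦ inv_nonneg.2 (hA.trans ht.1).le) fun t ht ↦ ?_).trans_eq ?_
  · have ht₀ := hA.trans ht.1
    calc mfhKernel d b a r t ≤ t⁻¹ * exp (-b * t) := mfhKernel_le_inv_mul_exp hd ha hr ht₀
      _ ≤ t⁻¹ * 1 := by gcongr; exact exp_le_one_iff.2 (by nlinarith)
      _ = t⁻¹ := mul_one _
  · rw [← intervalIntegral.integral_of_le hAB, integral_inv_of_pos hA (hA.trans_le hAB)]

lemma setLIntegral_Ioi_mfhKernel_le_inv (hd : 2 ≤ d) (ha : 0 ≤ a) (hb : 0 < b) (hr : 0 ≤ r)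
    {M : ℝ} (hM : 0 < M) :
    ∫⁻ t in Ioi M, ENNReal.ofReal (mfhKernel d b a r t) ≤ ENNReal.ofReal (b * M)⁻¹ := by
  refine (setLIntegral_ofReal_le_integral measurableSet_Ioi
    ((exp_neg_integrableOn_Ioi M hb).const_mul M⁻¹) (fun _ _ ↦ by positivity)
    fun t ht ↦ ?_).trans (ENNReal.ofReal_le_ofReal ?_)
  · calc mfhKernel d b a r t ≤ t⁻¹ * exp (-b * t) :=
          mfhKernel_le_inv_mul_exp hd ha hr (hM.trans ht)
      _ ≤ M⁻¹ * exp (-b * t) := by gcongr; exact le_of_lt ht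
  · rw [integral_const_mul, integral_exp_mul_Ioi (neg_lt_zero.2 hb), mul_inv, mul_comm b⁻¹,
    neg_div_neg_eq]
    gcongr
    calc exp (-b * M) / b ≤ 1 / b := by gcongr; exact exp_le_one_iff.2 (by nlinarith)
      _ = b⁻¹ := one_div b

lemma setLIntegral_Ioi_zero_mfhKernel_le_rpow (hd : 3 ≤ d) (ha : 0 < a) (hb : 0 ≤ b)
    (hr : 0 ≤ r) :
    ∫⁻ t in Ioi 0, ENNReal.ofReal (mfhKernel d b a r t)
      ≤ ENNReal.ofReal ((nearConst d a + 2 / (d - 2)) * (r + 1) ^ ((2 : ℝ) - d)) := by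
  have hd' : (3 : ℝ) ≤ d := by exact_mod_cast hd
  have hρ : 0 < r + 1 := by linarith
  have hsq : ((r + 1) ^ 2) ^ (1 - (d : ℝ) / 2) = (r + 1) ^ ((2 : ℝ) - d) := by
    rw [← rpow_natCast, ← rpow_mul hρ.le]; ring_nf
  rw [setLIntegral_Ioi_eq_add (by positivity : (0 : ℝ) ≤ (r + 1) ^ 2), add_mul,
    ENNReal.ofReal_add (mul_nonneg (nearConst_nonneg d ha) (by positivity))
      (mul_nonneg (div_nonneg zero_le_two (by linarith)) (by positivity))]
  gcongr
  · exact setLIntegral_Ioc_mfhKernel_le ha hb hr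
  · rw [← hsq]
    exact setLIntegral_Ioi_mfhKernel_le_rpow hd ha.le hb hr (by positivity)

lemma setLIntegral_Ioi_zero_mfhKernel_le_log (hd : 2 ≤ d) (ha : 0 < a) {R : ℝ} (hR : 1 ≤ R)
    (hr : 0 ≤ r) :
    ∫⁻ t in Ioi 0, ENNReal.ofReal (mfhKernel d (2 * R ^ 2)⁻¹ a r t)
      ≤ ENNReal.ofReal ((nearConst d a + 2) * (1 + log (R / min (r + 1) R))) := by
  set ρ := r + 1
  set q := R / min ρ R with hq
  have hρ₁ : 1 ≤ ρ := by linarith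
  have hm : 0 < min ρ R := lt_min (by linarith) (by linarith)
  have hq₁ : 1 ≤ q := (one_le_div hm).2 (min_le_right _ _)
  have hRq : R ≤ ρ * q := by
    rw [hq, ← mul_div_assoc, le_div_iff₀ hm]
    nlinarith [min_le_left ρ R]
  have hρq : ρ ^ 2 ≤ (ρ * q) ^ 2 :=
    pow_le_pow_left₀ (by linarith) (le_mul_of_one_le_right (by linarith) hq₁) 2
  have hK := nearConst_nonneg d ha
  have hlog := log_nonneg hq₁
  rw [setLIntegral_Ioi_eq_add (by positivity : (0 : ℝ) ≤ ρ ^ 2), setLIntegral_Ioi_eq_add hρq]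
  calc _ ≤ ENNReal.ofReal (nearConst d a) + (ENNReal.ofReal (2 * log q) + ENNReal.ofReal 2) := by
        gcongr
        · refine (setLIntegral_Ioc_mfhKernel_le ha (by positivity) hr).trans
            (ENNReal.ofReal_le_ofReal (mul_le_of_le_one_right hK
              (rpow_le_one_of_one_le_of_nonpos hρ₁ ?_)))
          have : (2 : ℝ) ≤ d := by exact_mod_cast hd
          linarith
        · refine (setLIntegral_Ioc_mfhKernel_le_log hd ha.le (by positivity) hr (by positivity)
            hρq).trans_eq ?_
          rw [mul_pow, mul_div_cancel_left₀ _ (by positivity), log_pow]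
          norm_num
        · refine (setLIntegral_Ioi_mfhKernel_le_inv hd ha.le (by positivity) hr
            (by nlinarith)).trans (ENNReal.ofReal_le_ofReal ?_)
          rw [mul_inv, inv_inv, mul_inv_le_iff₀ (by nlinarith)]
          nlinarith [pow_le_pow_left₀ (by linarith) hRq 2]
    _ = ENNReal.ofReal (nearConst d a + (2 * log q + 2)) := by
        rw [ENNReal.ofReal_add hK (by positivity), ENNReal.ofReal_add (by positivity) zero_le_two]
    _ ≤ ENNReal.ofReal ((nearConst d a + 2) * (1 + log q)) :=
        ENNReal.ofReal_le_ofReal (by nlinarith)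

end Kernel

lemma exists_setLIntegral_mfhKernel_le {d : ℕ} {a : ℝ} (hd : 2 ≤ d) (ha : 0 < a) :
    ∃ C : ℝ, 0 < C ∧ ∀ R : ℝ, 1 ≤ R → ∀ r : ℝ, 0 ≤ r →
      ∫⁻ t in Ioi 0, ENNReal.ofReal (mfhKernel d (2 * R ^ 2)⁻¹ a r t)
        ≤ ENNReal.ofReal (C * if d = 2 then 1 + log (R / min (r + 1) R)
            else (r + 1) ^ ((2 : ℝ) - d)) := by
  have hK := nearConst_nonneg d ha
  by_cases hd₂ : d = 2
  · refine ⟨nearConst d a + 2, by positivity, fun R hR r hr ↦ ?_⟩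
    rw [if_pos hd₂]
    exact setLIntegral_Ioi_zero_mfhKernel_le_log hd ha hR hr
  · have hd₃ : 3 ≤ d := by omega
    have hd' : (3 : ℝ) ≤ d := by exact_mod_cast hd₃
    refine ⟨nearConst d a + 2 / (d - 2), by
      have : 0 < 2 / ((d : ℝ) - 2) := div_pos two_pos (by linarith)
      positivity, fun R hR r hr ↦ ?_⟩
    rw [if_neg hd₂]
    exact setLIntegral_Ioi_zero_mfhKernel_le_rpow hd₃ ha (by positivity) hr

lemma rpow_mul_exp_le_exp_mul_mfhKernel (d : ℕ) {c R r t : ℝ} (hc : 0 < c) (hR : 1 ≤ R)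
    (hr : 0 ≤ r) (ht : 0 < t) :
    (1 + t) ^ (-(d : ℝ) / 2) * exp (-t / R ^ 2 - c * mfh r t)
      ≤ exp (-(min c 1 / 2) * r / R) * mfhKernel d (2 * R ^ 2)⁻¹ (c / 2) r t := by
  have hkey := min_mul_div_le_add_mfh hc hR hr ht
  have hR₀ : 0 < R := one_pos.trans_le hR
  have h₁ : -(min c 1 / 2) * r / R = -(min c 1 * (r / R)) / 2 := by ring
  have h₂ : -(2 * R ^ 2)⁻¹ * t = -(t / R ^ 2) / 2 := by field_simp
  have h₃ : -t / R ^ 2 = -(t / R ^ 2) := neg_div _ _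
  unfold mfhKernel
  rw [mul_left_comm, ← exp_add]
  gcongr
  rw [h₁, h₂, h₃]
  linarith

/-- For `d ≥ 2`, `R ≥ 1`, `c > 0`, there are `C, c₂ > 0` (depending only on `d, c`) with
`∫_0^∞ (1+t)^{-d/2} exp(-t/R² - c h(|y|,t)) dt ≤ C e^{-c₂|y|/R} v(|y|)` for all `y ∈ ℤ^d`. -/
theorem stmt14 (d : ℕ) (hd : 2 ≤ d) (c : ℝ) (hc : 0 < c) :
    ∃ C c₂ : ℝ, 0 < C ∧ 0 < c₂ ∧
      ∀ R : ℝ, 1 ≤ R → ∀ y : Fin d → ℤ,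
        (∫⁻ t in Set.Ioi (0 : ℝ), ENNReal.ofReal
            ((1 + t) ^ (-(d : ℝ) / 2) *
              Real.exp (-t / R ^ 2 - c * mfh (znorm d y) t)))
          ≤ ENNReal.ofReal (C * Real.exp (-c₂ * znorm d y / R) *
              (if d = 2 then 1 + Real.log (R / min (znorm d y + 1) R)
                else (znorm d y + 1) ^ ((2 : ℝ) - d))) := by
  obtain ⟨C, hC, hbound⟩ := exists_setLIntegral_mfhKernel_le hd (half_pos hc)
  refine ⟨C, min c 1 / 2, hC, by positivity, fun R hR y ↦ ?_⟩
  have hr : 0 ≤ znorm d y := sqrt_nonneg _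
  set decay := exp (-(min c 1 / 2) * znorm d y / R)
  calc _ ≤ ∫⁻ t in Ioi 0, ENNReal.ofReal decay
          * ENNReal.ofReal (mfhKernel d (2 * R ^ 2)⁻¹ (c / 2) (znorm d y) t) :=
        setLIntegral_mono' measurableSet_Ioi fun t ht ↦ by
          rw [← ENNReal.ofReal_mul (exp_nonneg _)]
          exact ENNReal.ofReal_le_ofReal (rpow_mul_exp_le_exp_mul_mfhKernel d hc hR hr ht)
    _ = ENNReal.ofReal decay
          * ∫⁻ t in Ioi 0, ENNReal.ofReal (mfhKernel d (2 * R ^ 2)⁻¹ (c / 2) (znorm d y) t) :=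
        lintegral_const_mul' _ _ ENNReal.ofReal_ne_top
    _ ≤ _ := by
        grw [hbound R hR _ hr]
        rw [← ENNReal.ofReal_mul (exp_nonneg _), mul_left_comm, mul_assoc]
end
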